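/- arXiv:2008.03815 — 2 statements merged into one kernel-verified Lean document; each statement's English description precedes it below -/
import Mathlib

section
/- Let T be a simple tile of a periodic solution with temporal period τ and spatial period σ. Then: (1) rank(T) ≥ σ/gcd(σ, τ); and (2) for any positive integer y, rank(T) = y if and only if s(T) = τ·y. In particular, rank(T) = σ/gcd(σ, τ) if and only if s(T) = lcm(σ, τ). -/
open Filter

/-- An `n`-state 2-neighbor cellular automaton rule. -/
abbrev CARule (n : ℕ) := Fin n → Fin n → Fin n

/-- One step of the CA evolution: `ξ_{t+1}(x) = f(ξ_t(x-1), ξ_t(x))`. -/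
def caStep {n : ℕ} (f : CARule n) (ξ : ℤ → Fin n) : ℤ → Fin n :=
  fun x => f (ξ (x - 1)) (ξ x)

/-- The trajectory of an initial configuration under the rule `f`. -/
def caTraj {n : ℕ} (f : CARule n) (ξ : ℤ → Fin n) : ℕ → ℤ → Fin n
  | 0 => ξ
  | t + 1 => caStep f (caTraj f ξ t)

/-- `ξ` is (the initial configuration of) a periodic solution of `f` with
minimal temporal period `τ` and minimal spatial period `σ`. -/
def IsPS {n : ℕ} (f : CARule n) (ξ : ℤ → Fin n) (τ σ : ℕ) : Prop :=
  0 < τ ∧ 0 < σ ∧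
  (∀ x : ℤ, ξ (x + (σ : ℤ)) = ξ x) ∧
  (∀ σ' : ℕ, 0 < σ' → (∀ x : ℤ, ξ (x + (σ' : ℤ)) = ξ x) → σ ≤ σ') ∧
  caTraj f ξ τ = ξ ∧
  (∀ τ' : ℕ, 0 < τ' → caTraj f ξ τ' = ξ → τ ≤ τ')

/-- `η` is a proper initial configuration for the periodic solution `ξ`:
it agrees with `ξ` at all sites `≤ y` for some `y`. -/
def IsProper {n : ℕ} (ξ η : ℤ → Fin n) : Prop :=
  ∃ y : ℤ, ∀ x ≤ y, η x = ξ x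

/-- The periodic solution `ξ` of `f` is weakly robust: the expansion velocity is
positive, i.e. there is `v > 0` such that for every proper initial configuration
`η`, eventually (in `t`) the two trajectories agree at all sites `x ≤ v·t`
(equivalently, `inf_η liminf_t s_t(η)/t > 0`). -/
def IsWeaklyRobust {n : ℕ} (f : CARule n) (ξ : ℤ → Fin n) : Prop :=
  ∃ v : ℝ, 0 < v ∧ ∀ η : ℤ → Fin n, IsProper ξ η →
    ∀ᶠ t : ℕ in atTop, ∀ x : ℤ, (x : ℝ) ≤ v * t → caTraj f η t x = caTraj f ξ t x

/-- The label (τ-periodic sequence) `A` right-extends to `B` under `f`: `A → B`. -/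
def RightExtends {n : ℕ} (f : CARule n) (A B : ℕ → Fin n) : Prop :=
  ∀ i : ℕ, f (A i) (B i) = B (i + 1)

/-- The sequence `c_{j+1} = f(a_j, c_j)` started at `c₀`. -/
def chaseSeq {n : ℕ} (f : CARule n) (A : ℕ → Fin n) (c₀ : Fin n) : ℕ → Fin n
  | 0 => c₀
  | j + 1 => f (A j) (chaseSeq f A c₀ j)

/-- The label `A` decides `B` under `f`: `A ⇒ B`. -/
def Decides {n : ℕ} (f : CARule n) (A B : ℕ → Fin n) : Prop :=
  RightExtends f A B ∧ ∀ c₀ : Fin n, ∃ j : ℕ, chaseSeq f A c₀ j = B j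

/-- `T` is a (τ,σ)-periodic array (row index mod τ, column index mod σ). -/
def IsTilePeriodic {n : ℕ} (τ σ : ℕ) (T : ℕ → ℕ → Fin n) : Prop :=
  (∀ i j, T (i + τ) j = T i j) ∧ (∀ i j, T i (j + σ) = T i j)

/-- The set of states appearing in the tile `T`. -/
def tileStates (n τ σ : ℕ) (T : ℕ → ℕ → Fin n) : Finset (Fin n) :=
  (Finset.range τ ×ˢ Finset.range σ).image fun p => T p.1 p.2

/-- The set of horizontally adjacent pairs appearing in the tile `T`. -/
def tilePairs (n τ σ : ℕ) (T : ℕ → ℕ → Fin n) : Finset (Fin n × Fin n) :=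
  (Finset.range τ ×ˢ Finset.range σ).image fun p => (T p.1 p.2, T p.1 (p.2 + 1))

/-- `T` is a tile of a periodic solution: uniqueness of assignment, each row has
minimal period `σ`, and the cyclic sequence of rows has minimal period `τ`. -/
def IsPSTile (n τ σ : ℕ) (T : ℕ → ℕ → Fin n) : Prop :=
  IsTilePeriodic τ σ T ∧
  (∀ i j k m, T i j = T k m → T i (j + 1) = T k (m + 1) →
      T (i + 1) (j + 1) = T (k + 1) (m + 1)) ∧
  (∀ i : ℕ, ∀ σ' : ℕ, 0 < σ' → (∀ j, T i (j + σ') = T i j) → σ ≤ σ') ∧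
  (∀ τ' : ℕ, 0 < τ' → (∀ i j, T (i + τ') j = T i j) → τ ≤ τ')

/-- `T` is a tile of a periodic solution of the given rule `f`. -/
def IsPSTileOf {n : ℕ} (f : CARule n) (τ σ : ℕ) (T : ℕ → ℕ → Fin n) : Prop :=
  IsTilePeriodic τ σ T ∧
  (∀ i j, f (T i j) (T i (j + 1)) = T (i + 1) (j + 1)) ∧
  (∀ i : ℕ, ∀ σ' : ℕ, 0 < σ' → (∀ j, T i (j + σ') = T i j) → σ ≤ σ') ∧
  (∀ τ' : ℕ, 0 < τ' → (∀ i j, T (i + τ') j = T i j) → τ ≤ τ')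

/-- `T` is simple: the assignment number `p(T)` equals the number of states `s(T)`. -/
def IsSimpleTile (n τ σ : ℕ) (T : ℕ → ℕ → Fin n) : Prop :=
  (tilePairs n τ σ T).card = (tileStates n τ σ T).card

/-- The rank of a tile: the largest `x` such that some `x` columns of `T`
together contain `x * τ` pairwise distinct states. -/
noncomputable def tileRank (n τ σ : ℕ) (T : ℕ → ℕ → Fin n) : ℕ :=
  sSup {x : ℕ | ∃ J : Finset ℕ, J ⊆ Finset.range σ ∧ J.card = x ∧
    ((J ×ˢ Finset.range τ).image fun p => T p.2 p.1).card = x * τ}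

/-- The tile of the periodic solution `ξ` of `f`: `a_{i,j} = ξ_i(j)`. -/
def psTile {n : ℕ} (f : CARule n) (ξ : ℤ → Fin n) : ℕ → ℕ → Fin n :=
  fun i j => caTraj f ξ i (j : ℤ)
set_option linter.unusedVariables false

namespace STAux

variable {n τ σ : ℕ} {T : ℕ → ℕ → Fin n}

def Per (τ σ : ℕ) (T : ℕ → ℕ → Fin n) (p q : ℕ) : Prop :=
  ∀ i j, T (i + p) (j + q) = T i j

lemma row_mul (hper : IsTilePeriodic τ σ T) (k i j : ℕ) : T (i + τ * k) j = T i j := by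
  induction k with
  | zero => simp
  | succ k ih =>
      have h : i + τ * (k+1) = i + τ * k + τ := by ring
      rw [h, hper.1, ih]

lemma col_mul (hper : IsTilePeriodic τ σ T) (k i j : ℕ) : T i (j + σ * k) = T i j := by
  induction k with
  | zero => simp
  | succ k ih =>
      have h : j + σ * (k+1) = j + σ * k + σ := by ring
      rw [h, hper.2, ih]

lemma row_mod (hper : IsTilePeriodic τ σ T) (i j : ℕ) : T i j = T (i % τ) j := by
  conv_lhs => rw [← Nat.mod_add_div i τ]
  rw [row_mul hper]

lemma T_mod (hper : IsTilePeriodic τ σ T) (i j : ℕ) : T i j = T (i % τ) (j % σ) := by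
  conv_lhs => rw [← Nat.mod_add_div i τ, ← Nat.mod_add_div j σ]
  rw [row_mul hper, col_mul hper]

lemma mem_states (hper : IsTilePeriodic τ σ T) (hτ : 0 < τ) (hσ : 0 < σ) (i j : ℕ) :
    T i j ∈ tileStates n τ σ T := by
  rw [T_mod hper]
  simp only [tileStates, Finset.mem_image, Finset.mem_product, Finset.mem_range]
  exact ⟨(i % τ, j % σ), ⟨Nat.mod_lt _ hτ, Nat.mod_lt _ hσ⟩, rfl⟩

lemma mem_pairs (hper : IsTilePeriodic τ σ T) (hτ : 0 < τ) (hσ : 0 < σ) (i j : ℕ) :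
    (T i j, T i (j+1)) ∈ tilePairs n τ σ T := by
  have h2 : T i (j+1) = T (i % τ) (j % σ + 1) := by
    conv_lhs => rw [← Nat.mod_add_div i τ]
    rw [row_mul hper]
    have h3 : j + 1 = (j % σ + 1) + σ * (j / σ) := by
      have := Nat.mod_add_div j σ; omega
    rw [h3, col_mul hper]
  rw [T_mod hper, h2]
  simp only [tilePairs, Finset.mem_image, Finset.mem_product, Finset.mem_range]
  exact ⟨(i % τ, j % σ), ⟨Nat.mod_lt _ hτ, Nat.mod_lt _ hσ⟩, rfl⟩

lemma states_eq_image_fst (hper : IsTilePeriodic τ σ T) (hτ : 0 < τ) (hσ : 0 < σ) :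
    (tilePairs n τ σ T).image Prod.fst = tileStates n τ σ T := by
  apply Finset.Subset.antisymm
  · intro a ha
    simp only [Finset.mem_image] at ha
    obtain ⟨p, hp, rfl⟩ := ha
    simp only [tilePairs, Finset.mem_image] at hp
    obtain ⟨q, _, rfl⟩ := hp
    exact mem_states hper hτ hσ _ _
  · intro a ha
    simp only [tileStates, Finset.mem_image, Finset.mem_product, Finset.mem_range] at ha
    obtain ⟨p, hp, rfl⟩ := ha
    exact Finset.mem_image.2 ⟨(T p.1 p.2, T p.1 (p.2+1)), mem_pairs hper hτ hσ _ _, rfl⟩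

lemma nextEq (hper : IsTilePeriodic τ σ T) (hτ : 0 < τ) (hσ : 0 < σ)
    (hsimple : (tilePairs n τ σ T).card = (tileStates n τ σ T).card)
    {i j k m : ℕ} (h : T i j = T k m) : T i (j+1) = T k (m+1) := by
  have hcard : ((tilePairs n τ σ T).image Prod.fst).card = (tilePairs n τ σ T).card := by
    rw [states_eq_image_fst hper hτ hσ, hsimple]
  have hinj : Set.InjOn Prod.fst (tilePairs n τ σ T : Set (Fin n × Fin n)) :=
    Finset.card_image_iff.mp hcard
  have h1 := mem_pairs hper hτ hσ i j
  have h2 := mem_pairs hper hτ hσ k m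
  have := hinj (by exact_mod_cast h1) (by exact_mod_cast h2) (by simpa using h)
  exact congrArg Prod.snd this

lemma shift (hper : IsTilePeriodic τ σ T) (hτ : 0 < τ) (hσ : 0 < σ)
    (huniq : ∀ i j k m, T i j = T k m → T i (j + 1) = T k (m + 1) →
      T (i + 1) (j + 1) = T (k + 1) (m + 1))
    (hsimple : (tilePairs n τ σ T).card = (tileStates n τ σ T).card)
    {a b c d : ℕ} (h : T a b = T c d) (p q : ℕ) :
    T (a + p) (b + q) = T (c + p) (d + q) := by
  have base : ∀ q, T a (b + q) = T c (d + q) := by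
    intro q
    induction q with
    | zero => simpa using h
    | succ q ih =>
        have h2 := nextEq hper hτ hσ hsimple ih
        have e1 : b + q + 1 = b + (q + 1) := by omega
        have e2 : d + q + 1 = d + (q + 1) := by omega
        rwa [e1, e2] at h2
  have diag : ∀ p q, T (a + p) (b + (p + q)) = T (c + p) (d + (p + q)) := by
    intro p
    induction p with
    | zero => intro q; simpa using base q
    | succ p ih =>
        intro q
        have h1 := ih q
        have h2 := ih (q + 1)
        have e1 : b + (p + (q + 1)) = b + (p + q) + 1 := by omega
        have e2 : d + (p + (q + 1)) = d + (p + q) + 1 := by omega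
        rw [e1, e2] at h2
        have h3 := huniq (a + p) (b + (p + q)) (c + p) (d + (p + q)) h1 h2
        have e3 : a + p + 1 = a + (p + 1) := by omega
        have e4 : b + (p + q) + 1 = b + (p + 1 + q) := by omega
        have e5 : c + p + 1 = c + (p + 1) := by omega
        have e6 : d + (p + q) + 1 = d + (p + 1 + q) := by omega
        rwa [e3, e4, e5, e6] at h3
  obtain ⟨t, rfl⟩ : ∃ t, σ = t + 1 := ⟨σ - 1, by omega⟩
  have key := diag p (q + p * t)
  have e1 : b + (p + (q + p * t)) = (b + q) + (t + 1) * p := by ring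
  have e2 : d + (p + (q + p * t)) = (d + q) + (t + 1) * p := by ring
  rw [e1, e2, col_mul hper, col_mul hper] at key
  exact key

lemma per_of_eq (hper : IsTilePeriodic τ σ T) (hτ : 0 < τ) (hσ : 0 < σ)
    (huniq : ∀ i j k m, T i j = T k m → T i (j + 1) = T k (m + 1) →
      T (i + 1) (j + 1) = T (k + 1) (m + 1))
    (hsimple : (tilePairs n τ σ T).card = (tileStates n τ σ T).card)
    {c d p q : ℕ} (h : T (c + p) (d + q) = T c d) : Per τ σ T p q := by
  intro i j
  have hc : c ≤ c * τ := Nat.le_mul_of_pos_right c hτ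
  have hd : d ≤ d * σ := Nat.le_mul_of_pos_right d hσ
  have key := shift hper hτ hσ huniq hsimple h (i + c * τ - c) (j + d * σ - d)
  have e1 : c + p + (i + c * τ - c) = (i + p) + τ * c := by rw [mul_comm τ c]; omega
  have e2 : d + q + (j + d * σ - d) = (j + q) + σ * d := by rw [mul_comm σ d]; omega
  have e3 : c + (i + c * τ - c) = i + τ * c := by rw [mul_comm τ c]; omega
  have e4 : d + (j + d * σ - d) = j + σ * d := by rw [mul_comm σ d]; omega
  rw [e1, e2, e3, e4, row_mul hper, col_mul hper, row_mul hper, col_mul hper] at key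
  exact key

lemma per_add {p q p' q' : ℕ} (h1 : Per τ σ T p q) (h2 : Per τ σ T p' q') :
    Per τ σ T (p + p') (q + q') := by
  intro i j
  calc T (i + (p + p')) (j + (q + q'))
      = T (i + p' + p) (j + q' + q) := by rw [show i + (p+p') = i + p' + p by omega,
        show j + (q+q') = j + q' + q by omega]
    _ = T (i + p') (j + q') := h1 _ _
    _ = T i j := h2 i j

lemma per_sub {p q p' q' : ℕ} (h1 : Per τ σ T p q) (h2 : Per τ σ T (p + p') (q + q')) :
    Per τ σ T p' q' := by
  intro i j
  have a1 := h1 (i + p') (j + q')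
  rw [show i + p' + p = i + (p + p') by omega, show j + q' + q = j + (q + q') by omega,
    h2 i j] at a1
  exact a1.symm

lemma per_mul {p q : ℕ} (h : Per τ σ T p q) (m : ℕ) : Per τ σ T (m * p) (m * q) := by
  induction m with
  | zero => intro i j; simp
  | succ m ih =>
      have h2 := per_add ih h
      rwa [show m * p + p = (m+1) * p by ring, show m * q + q = (m+1) * q by ring] at h2

lemma per_tau (hper : IsTilePeriodic τ σ T) : Per τ σ T τ 0 := fun i j => hper.1 i j

lemma per_sigma (hper : IsTilePeriodic τ σ T) : Per τ σ T 0 σ := fun i j => hper.2 i j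

lemma sigma_dvd (hper : IsTilePeriodic τ σ T) (hσ : 0 < σ)
    (hmin : ∀ i : ℕ, ∀ σ' : ℕ, 0 < σ' → (∀ j, T i (j + σ') = T i j) → σ ≤ σ')
    {q : ℕ} (h : Per τ σ T 0 q) : σ ∣ q := by
  have hmul : Per τ σ T 0 (σ * (q / σ)) := by
    have h2 := per_mul (per_sigma hper) (q / σ)
    rwa [Nat.mul_zero, mul_comm (q / σ) σ] at h2
  have hmod : Per τ σ T 0 (q % σ) := by
    apply per_sub hmul
    rwa [Nat.zero_add, Nat.div_add_mod]
  rcases Nat.eq_zero_or_pos (q % σ) with h0 | hpos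
  · exact Nat.dvd_of_mod_eq_zero h0
  · have hle := hmin 0 (q % σ) hpos (fun j => hmod 0 j)
    have := Nat.mod_lt q hσ
    omega

lemma tau_dvd (hper : IsTilePeriodic τ σ T) (hτ : 0 < τ)
    (hmin : ∀ τ' : ℕ, 0 < τ' → (∀ i j, T (i + τ') j = T i j) → τ ≤ τ')
    {p : ℕ} (h : Per τ σ T p 0) : τ ∣ p := by
  have hmul : Per τ σ T (τ * (p / τ)) 0 := by
    have h2 := per_mul (per_tau hper) (p / τ)
    rwa [Nat.mul_zero, mul_comm (p / τ) τ] at h2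
  have hmod : Per τ σ T (p % τ) 0 := by
    apply per_sub hmul
    rwa [Nat.add_zero, Nat.div_add_mod]
  rcases Nat.eq_zero_or_pos (p % τ) with h0 | hpos
  · exact Nat.dvd_of_mod_eq_zero h0
  · have hle := hmin (p % τ) hpos (fun i j => hmod i j)
    have := Nat.mod_lt p hτ
    omega

end STAux

open STAux

/-- for a simple tile of a periodic solution,
(1) `rank(T) ≥ σ/gcd(σ,τ)`; (2) for positive `y`, `rank(T) = y ↔ s(T) = τ·y`;
in particular `rank(T) = σ/gcd(σ,τ) ↔ s(T) = lcm(σ,τ)`. -/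
theorem simple_tile_rank (n τ σ : ℕ) (hτ : 1 ≤ τ) (hσ : 1 ≤ σ)
    (T : ℕ → ℕ → Fin n) (hT : IsPSTile n τ σ T) (hsimple : IsSimpleTile n τ σ T) :
    σ / Nat.gcd σ τ ≤ tileRank n τ σ T ∧
    (∀ y : ℕ, 0 < y → (tileRank n τ σ T = y ↔ (tileStates n τ σ T).card = τ * y)) ∧
    (tileRank n τ σ T = σ / Nat.gcd σ τ ↔
      (tileStates n τ σ T).card = Nat.lcm σ τ) := by
  have hsim : (tilePairs n τ σ T).card = (tileStates n τ σ T).card := hsimple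
  classical
  have hτ0 : 0 < τ := hτ
  have hσ0 : 0 < σ := hσ
  obtain ⟨hper, huniq, hσmin, hτmin⟩ := hT
  -- the minimal positive "column period" e
  have hEex : ∃ q, 0 < q ∧ ∃ k, Per τ σ T k q := ⟨σ, hσ0, 0, per_sigma hper⟩
  set e := Nat.find hEex with he_def
  have hespec := Nat.find_spec hEex
  have he_pos : 0 < e := hespec.1
  obtain ⟨k₀, hk₀⟩ := hespec.2
  have hemin : ∀ q, 0 < q → (∃ k, Per τ σ T k q) → e ≤ q :=
    fun q h1 h2 => Nat.find_min' hEex ⟨h1, h2⟩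
  have hEsub : ∀ j j', (∃ k, Per τ σ T k j) → (∃ k, Per τ σ T k (j + j')) →
      (∃ k, Per τ σ T k j') := by
    rintro j j' ⟨k, hk⟩ ⟨k', hk'⟩
    have hb : Per τ σ T (k' + k * τ) (j + j' + 0) :=
      per_add hk' (by simpa using per_mul (per_tau hper) k)
    have hkK : k ≤ k * τ := Nat.le_mul_of_pos_right k hτ0
    obtain ⟨s, hs⟩ := Nat.exists_eq_add_of_le hkK
    rw [hs, show k' + (k + s) = k + (k' + s) by omega, Nat.add_zero] at hb
    exact ⟨k' + s, per_sub hk hb⟩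
  have hEmul : ∀ m, ∃ k, Per τ σ T k (e * m) := by
    intro m
    have h2 := per_mul hk₀ m
    exact ⟨m * k₀, by rwa [mul_comm m e] at h2⟩
  have hedvd : ∀ q, (∃ k, Per τ σ T k q) → e ∣ q := by
    intro q hq
    have h2 : ∃ k, Per τ σ T k (q % e) := by
      apply hEsub (e * (q / e)) (q % e) (hEmul _)
      rwa [Nat.div_add_mod]
    rcases Nat.eq_zero_or_pos (q % e) with h0 | hpos
    · exact Nat.dvd_of_mod_eq_zero h0
    · have h3 := hemin _ hpos h2
      have h4 := Nat.mod_lt q he_pos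
      omega
  have hedσ : e ∣ σ := hedvd σ ⟨0, per_sigma hper⟩
  have heσ : e ≤ σ := Nat.le_of_dvd hσ0 hedσ
  have hσdτe : σ ∣ τ * e := by
    have h1 : Per τ σ T (τ * k₀) (τ * e) := per_mul hk₀ τ
    have h2 : Per τ σ T (τ * k₀) 0 := by
      have h3 := per_mul (per_tau hper) k₀
      rwa [mul_comm k₀ τ, Nat.mul_zero] at h3
    have h3 : Per τ σ T 0 (τ * e) := by
      apply per_sub h2
      rwa [Nat.add_zero, Nat.zero_add]
    exact sigma_dvd hper hσ0 hσmin h3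
  -- divisibility from coincidences
  have hEdiff : ∀ i j i' j', T i j = T i' j' → j ≤ j' → e ∣ (j' - j) := by
    intro i j i' j' h hjj
    have hp1 : i' + 1 ≤ τ * (i' + 1) := Nat.le_mul_of_pos_left (i' + 1) hτ0
    have hq1 : j' + 1 ≤ σ * (j' + 1) := Nat.le_mul_of_pos_left (j' + 1) hσ0
    have hlei : i' ≤ i + τ * (i' + 1) :=
      le_trans (le_of_lt (lt_of_lt_of_le (Nat.lt_succ_self i') hp1)) (Nat.le_add_left _ i)
    have hlej : j' ≤ j + σ * (j' + 1) :=
      le_trans (le_of_lt (lt_of_lt_of_le (Nat.lt_succ_self j') hq1)) (Nat.le_add_left _ j)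
    have heq : T (i' + (i + τ * (i' + 1) - i')) (j' + (j + σ * (j' + 1) - j')) = T i' j' := by
      rw [Nat.add_sub_cancel' hlei, Nat.add_sub_cancel' hlej, row_mul hper, col_mul hper]
      exact h
    have hper2 := per_of_eq hper hτ0 hσ0 huniq hsim heq
    have hd1 : e ∣ (j + σ * (j' + 1) - j') := hedvd _ ⟨_, hper2⟩
    have hd2 : e ∣ σ * (j' + 1) := hedσ.mul_right _
    have hsub := Nat.dvd_sub hd2 hd1
    have heqq : σ * (j' + 1) - (j + σ * (j' + 1) - j') = j' - j := by
      generalize σ * (j' + 1) = Q at hq1 ⊢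
      omega
    rwa [heqq] at hsub
  have hτdiff : ∀ i i' j, T i j = T i' j → i ≤ i' → τ ∣ (i' - i) := by
    intro i i' j h hii
    have heq : T (i + (i' - i)) (j + 0) = T i j := by
      rw [Nat.add_zero, Nat.add_sub_cancel' hii]; exact h.symm
    exact tau_dvd hper hτ0 hτmin (per_of_eq hper hτ0 hσ0 huniq hsim heq)
  -- core injectivity on range τ × range e
  have hcore : ∀ i j i' j', i < τ → i' < τ → j < e → j' < e →
      T i j = T i' j' → i = i' ∧ j = j' := by
    intro i j i' j' hi hi' hj hj' h
    have hjj' : j = j' := by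
      rcases le_total j j' with hle | hle
      · have hd := hEdiff i j i' j' h hle
        have h0 : j' - j = 0 := by
          rcases Nat.eq_zero_or_pos (j' - j) with h0 | hpos
          · exact h0
          · exact absurd (Nat.le_of_dvd hpos hd) (by omega)
        omega
      · have hd := hEdiff i' j' i j h.symm hle
        have h0 : j - j' = 0 := by
          rcases Nat.eq_zero_or_pos (j - j') with h0 | hpos
          · exact h0
          · exact absurd (Nat.le_of_dvd hpos hd) (by omega)
        omega
    subst hjj'
    have hii' : i = i' := by
      rcases le_total i i' with hle | hle
      · have hd := hτdiff i i' j h hle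
        have h0 : i' - i = 0 := by
          rcases Nat.eq_zero_or_pos (i' - i) with h0 | hpos
          · exact h0
          · exact absurd (Nat.le_of_dvd hpos hd) (by omega)
        omega
      · have hd := hτdiff i' i j h.symm hle
        have h0 : i - i' = 0 := by
          rcases Nat.eq_zero_or_pos (i - i') with h0 | hpos
          · exact h0
          · exact absurd (Nat.le_of_dvd hpos hd) (by omega)
        omega
    exact ⟨hii', rfl⟩
  -- the states are exactly those in columns 0..e-1
  have hstates : tileStates n τ σ T =
      (Finset.range τ ×ˢ Finset.range e).image (fun p => T p.1 p.2) := by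
    apply Finset.Subset.antisymm
    · intro a ha
      simp only [tileStates, Finset.mem_image, Finset.mem_product, Finset.mem_range] at ha ⊢
      obtain ⟨⟨i, j⟩, ⟨hi, hj⟩, rfl⟩ := ha
      obtain ⟨K, hK⟩ := hEmul (j / e)
      refine ⟨((i + K * τ - K) % τ, j % e), ⟨Nat.mod_lt _ hτ0, Nat.mod_lt _ he_pos⟩, ?_⟩
      have hKle : K ≤ K * τ := Nat.le_mul_of_pos_right K hτ0
      have h1 := hK (i + K * τ - K) (j % e)
      rw [Nat.sub_add_cancel (le_trans hKle (Nat.le_add_left _ i)), Nat.mod_add_div] at h1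
      rw [← row_mod hper, ← h1, mul_comm K τ, row_mul hper]
    · intro a ha
      simp only [Finset.mem_image, Finset.mem_product, Finset.mem_range] at ha
      obtain ⟨⟨i, j⟩, ⟨hi, hj⟩, rfl⟩ := ha
      exact mem_states hper hτ0 hσ0 i j
  have hcardS : (tileStates n τ σ T).card = τ * e := by
    have hinjS : Set.InjOn (fun p : ℕ × ℕ => T p.1 p.2)
        ((Finset.range τ ×ˢ Finset.range e) : Finset (ℕ × ℕ)) := by
      intro p hp q hq h
      rw [Finset.mem_coe, Finset.mem_product, Finset.mem_range, Finset.mem_range] at hp hq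
      obtain ⟨h1, h2⟩ := hcore p.1 p.2 q.1 q.2 hp.1 hq.1 hp.2 hq.2 h
      exact Prod.ext_iff.mpr ⟨h1, h2⟩
    rw [hstates, Finset.card_image_of_injOn hinjS, Finset.card_product,
      Finset.card_range, Finset.card_range]
  -- rank = e
  have hmemR : ∃ J : Finset ℕ, J ⊆ Finset.range σ ∧ J.card = e ∧
      ((J ×ˢ Finset.range τ).image fun p => T p.2 p.1).card = e * τ := by
    refine ⟨Finset.range e, Finset.range_subset_range.2 heσ, Finset.card_range e, ?_⟩
    have hinj2 : Set.InjOn (fun p : ℕ × ℕ => T p.2 p.1)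
        ((Finset.range e ×ˢ Finset.range τ) : Finset (ℕ × ℕ)) := by
      intro p hp q hq h
      rw [Finset.mem_coe, Finset.mem_product, Finset.mem_range, Finset.mem_range] at hp hq
      obtain ⟨h1, h2⟩ := hcore p.2 p.1 q.2 q.1 hp.2 hq.2 hp.1 hq.1 h
      exact Prod.ext_iff.mpr ⟨h2, h1⟩
    rw [Finset.card_image_of_injOn hinj2, Finset.card_product,
      Finset.card_range, Finset.card_range]
  have hub : ∀ x : ℕ, (∃ J : Finset ℕ, J ⊆ Finset.range σ ∧ J.card = x ∧
      ((J ×ˢ Finset.range τ).image fun p => T p.2 p.1).card = x * τ) → x ≤ e := by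
    rintro x ⟨J, hJ, hcardJ, hcardI⟩
    have hsubset : ((J ×ˢ Finset.range τ).image fun p => T p.2 p.1) ⊆ tileStates n τ σ T := by
      intro a ha
      simp only [Finset.mem_image] at ha
      obtain ⟨p, hp, rfl⟩ := ha
      exact mem_states hper hτ0 hσ0 _ _
    have hle := Finset.card_le_card hsubset
    rw [hcardI, hcardS, mul_comm x τ] at hle
    exact Nat.le_of_mul_le_mul_left hle hτ0
  have hrank : tileRank n τ σ T = e := by
    unfold tileRank
    apply le_antisymm
    · exact csSup_le ⟨e, hmemR⟩ (fun x hx => hub x hx)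
    · exact le_csSup ⟨e, fun x hx => hub x hx⟩ hmemR
  -- statement (2)
  have main2 : ∀ y : ℕ, tileRank n τ σ T = y ↔ (tileStates n τ σ T).card = τ * y := by
    intro y
    rw [hrank, hcardS]
    constructor
    · rintro rfl; rfl
    · intro h; exact Nat.eq_of_mul_eq_mul_left hτ0 h
  -- statement (1)
  have hg : 0 < Nat.gcd σ τ := Nat.gcd_pos_of_pos_left τ hσ0
  have hσ1dvd : σ / Nat.gcd σ τ ∣ e := by
    obtain ⟨σ₁, hσ₁⟩ := Nat.gcd_dvd_left σ τ
    obtain ⟨τ₁, hτ₁⟩ := Nat.gcd_dvd_right σ τ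
    have hcop : Nat.Coprime (σ / Nat.gcd σ τ) (τ / Nat.gcd σ τ) :=
      Nat.coprime_div_gcd_div_gcd hg
    have hq1 : σ / Nat.gcd σ τ = σ₁ := Nat.div_eq_of_eq_mul_right hg hσ₁
    have hq2 : τ / Nat.gcd σ τ = τ₁ := Nat.div_eq_of_eq_mul_right hg hτ₁
    rw [hq1, hq2] at hcop
    rw [hq1]
    obtain ⟨c, hc⟩ := hσdτe
    have hc2 : τ₁ * e = σ₁ * c := by
      have h5 : Nat.gcd σ τ * (τ₁ * e) = Nat.gcd σ τ * (σ₁ * c) := by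
        rw [← mul_assoc, ← hτ₁, ← mul_assoc, ← hσ₁]
        exact hc
      exact Nat.eq_of_mul_eq_mul_left hg h5
    exact hcop.dvd_of_dvd_mul_left ⟨c, hc2⟩
  refine ⟨?_, fun y _ => main2 y, ?_⟩
  · rw [hrank]
    exact Nat.le_of_dvd he_pos hσ1dvd
  · have hlcm : τ * (σ / Nat.gcd σ τ) = Nat.lcm σ τ := by
      rw [Nat.lcm, ← Nat.mul_div_assoc τ (Nat.gcd_dvd_left σ τ), mul_comm τ σ]
    rw [← hlcm]
    exact main2 (σ / Nat.gcd σ τ)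
end

section
/- Fix τ, σ ≥ 1 and n, and let d = gcd(τ, σ), k = lcm(τ, σ), x = σ/d, with k ≤ n. Let 𝒯^{(0,x)} be the set of simple tiles of periodic solutions with periods τ and σ over ℤ_n having rank x (equivalently, having exactly k distinct states), counted up to cyclic shifts of rows and columns, and for 0 ≤ m ≤ k let 𝔗_m be the set of unordered pairs of distinct tiles in 𝒯^{(0,x)} having exactly m states in common. Then: (1) #𝒯^{(0,x)} = φ(d)·C(n,k)·(k−1)!; (2) for m < k, #𝔗_m = (1/2)·φ(d)·C(n,k)·(k−1)!·φ(d)·C(k,m)·C(n−k, k−m)·(k−1)!; and (3) #𝔗_k = (1/2)·φ(d)·C(n,k)·(k−1)!·(φ(d)·(k−1)! − 1). -/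
open Filter

/-- Simple tiles of periodic solutions with periods `τ, σ` over `ℤ_n` of
(minimal) rank `x = σ/gcd(τ,σ)`. -/
def RankXTile (n τ σ : ℕ) : Type :=
  {T : ℕ → ℕ → Fin n // IsPSTile n τ σ T ∧ IsSimpleTile n τ σ T ∧
    tileRank n τ σ T = σ / Nat.gcd τ σ}

/-- Identification of tiles by cyclic shifts of rows and columns. -/
def shiftRel {n τ σ : ℕ} (T₁ T₂ : RankXTile n τ σ) : Prop :=
  ∃ r c : ℕ, ∀ i j, T₂.1 i j = T₁.1 (i + r) (j + c)

/-- Tiles up to identification by cyclic shifts of rows and columns. -/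
def TileClass (n τ σ : ℕ) : Type :=
  Quot (@shiftRel n τ σ)

/-- The two tile classes `q₁, q₂` have exactly `m` states in common. -/
def commonStates {n τ σ : ℕ} (q₁ q₂ : TileClass n τ σ) (m : ℕ) : Prop :=
  ∃ T₁ T₂ : RankXTile n τ σ, Quot.mk _ T₁ = q₁ ∧ Quot.mk _ T₂ = q₂ ∧
    (tileStates n τ σ T₁.1 ∩ tileStates n τ σ T₂.1).card = m

/-!
In a simple tile equal states have equal right neighbours and, by uniqueness of assignment, equal
lower neighbours. Read as a function on `ZMod τ × ZMod σ`, a simple tile is therefore an injective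
labelling of the quotient by its group `Λ` of periods. Minimality of the periods says that `Λ`
meets both axes trivially, and the rank is the index of the projection of `Λ` to `ZMod σ`, so rank
`σ / d` means `|Λ| = d`. Such `Λ` are the graphs of the automorphisms of `ZMod d`, which are
`φ(d)` in number, and the quotient has `k = lcm τ σ` elements. Up to shifts, a tile is thus `Λ`
together with a labelling of a group of order `k` by `k` states up to translation; for a fixed
`k`-set of states there are `k! / k = (k - 1)!` of these. The three counts follow by summing over
the possible sets of states.
-/

section Tiles

variable {n τ σ : ℕ} {T : ℕ → ℕ → Fin n}

theorem IsTilePeriodic.apply_mod (hT : IsTilePeriodic τ σ T) (i j : ℕ) :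
    T i j = T (i % τ) (j % σ) := by
  have hrow : ∀ i j m, T (i + τ * m) j = T i j := fun i j m => by
    induction m with
    | zero => rfl
    | succ m ih => rw [Nat.mul_succ, ← Nat.add_assoc, hT.1, ih]
  have hcol : ∀ i j m, T i (j + σ * m) = T i j := fun i j m => by
    induction m with
    | zero => rfl
    | succ m ih => rw [Nat.mul_succ, ← Nat.add_assoc, hT.2, ih]
  conv_lhs => rw [← Nat.mod_add_div i τ, ← Nat.mod_add_div j σ]
  rw [hrow, hcol]

theorem IsTilePeriodic.apply_congr (hT : IsTilePeriodic τ σ T) {i i' j j' : ℕ}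
    (hi : i ≡ i' [MOD τ]) (hj : j ≡ j' [MOD σ]) : T i j = T i' j' := by
  rw [hT.apply_mod i j, hT.apply_mod i' j', hi, hj]

theorem IsTilePeriodic.mem_tilePairs (hT : IsTilePeriodic τ σ T) (hτ : 0 < τ) (hσ : 0 < σ)
    (i j : ℕ) : (T i j, T i (j + 1)) ∈ tilePairs n τ σ T := by
  refine Finset.mem_image.2 ⟨(i % τ, j % σ), ?_, ?_⟩
  · simp [Nat.mod_lt _ hτ, Nat.mod_lt _ hσ]
  · rw [← hT.apply_mod, hT.apply_congr (Nat.mod_modEq i τ) ((Nat.mod_modEq j σ).add_right 1)]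

theorem image_fst_tilePairs : (tilePairs n τ σ T).image Prod.fst = tileStates n τ σ T := by
  simp only [tilePairs, tileStates, Finset.image_image]
  rfl

/-- `p(T) = s(T)` says that the first projection is injective on horizontally adjacent pairs. -/
theorem isSimpleTile_iff (hT : IsTilePeriodic τ σ T) (hτ : 0 < τ) (hσ : 0 < σ) :
    IsSimpleTile n τ σ T ↔ ∀ {i j k m}, T i j = T k m → T i (j + 1) = T k (m + 1) := by
  rw [IsSimpleTile, ← image_fst_tilePairs, eq_comm, Finset.card_image_iff]
  refine ⟨fun hinj i j k m h => ?_, fun H => ?_⟩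
  · exact congrArg Prod.snd (hinj (hT.mem_tilePairs hτ hσ i j) (hT.mem_tilePairs hτ hσ k m) h)
  · simp only [Set.InjOn, tilePairs, Finset.coe_image, Set.mem_image]
    rintro _ ⟨⟨i, j⟩, -, rfl⟩ _ ⟨⟨k, m⟩, -, rfl⟩ h
    exact Prod.ext h (H h)

/-- Going right `σ - 1` steps and then using uniqueness of assignment moves a coincidence of
states one row down. -/
theorem IsSimpleTile.apply_add_eq (hs : IsSimpleTile n τ σ T) (hT : IsPSTile n τ σ T)
    (hτ : 0 < τ) (hσ : 0 < σ) {i j k m : ℕ} (h : T i j = T k m) (a b : ℕ) :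
    T (i + a) (j + b) = T (k + a) (m + b) := by
  have hright : ∀ {i j k m}, T i j = T k m → ∀ b, T i (j + b) = T k (m + b) :=
    fun h b => by
      induction b with
      | zero => exact h
      | succ b ih => exact (isSimpleTile_iff hT.1 hτ hσ).1 hs ih
  have hdown : ∀ {i j k m}, T i j = T k m → T (i + 1) j = T (k + 1) m := fun h => by
    have h' := hT.2.1 _ _ _ _ (hright h (σ - 1))
      ((isSimpleTile_iff hT.1 hτ hσ).1 hs (hright h (σ - 1)))
    rwa [Nat.add_assoc, Nat.add_assoc, Nat.sub_add_cancel hσ, hT.1.2, hT.1.2] at h'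
  induction a with
  | zero => exact hright h b
  | succ a ih => exact hdown ih

end Tiles

section Periods

variable {G α : Type*} [AddCommGroup G]

def periodSubgroup (f : G → α) : AddSubgroup G where
  carrier := {g | ∀ p, f (p + g) = f p}
  zero_mem' p := by rw [add_zero]
  add_mem' {a b} ha hb p := by rw [← add_assoc, hb, ha]
  neg_mem' {a} ha p := by rw [← ha, neg_add_cancel_right]

theorem mem_periodSubgroup {f : G → α} {g : G} :
    g ∈ periodSubgroup f ↔ ∀ p, f (p + g) = f p := Iff.rfl

theorem periodSubgroup_comp_add_right (f : G → α) (g : G) :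
    periodSubgroup (fun p => f (p + g)) = periodSubgroup f := by
  ext h
  simp only [mem_periodSubgroup, add_right_comm _ h g]
  exact ⟨fun H p => by simpa using H (p - g), fun H p => H (p + g)⟩

theorem periodSubgroup_comp_mk {Λ : AddSubgroup G} {ψ : G ⧸ Λ → α}
    (hψ : Function.Injective ψ) : periodSubgroup (fun p : G => ψ p) = Λ := by
  ext g
  simp only [mem_periodSubgroup, hψ.eq_iff, QuotientAddGroup.eq]
  exact ⟨fun H => by simpa using H 0, fun H _ => by simpa using neg_mem H⟩

theorem eq_iff_sub_mem_periodSubgroup {f : G → α}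
    (hf : ∀ p q r, f p = f q → f (p + r) = f (q + r)) {p q : G} :
    f p = f q ↔ p - q ∈ periodSubgroup f := by
  refine ⟨fun h r => ?_, fun h => by simpa using h q⟩
  have := hf p q (r - q) h
  rwa [add_sub_cancel, ← add_sub_assoc, add_sub_right_comm, add_comm] at this

def periodLift (f : G → α) : G ⧸ periodSubgroup f → α :=
  Quotient.lift f fun a b h => by
    simpa using (QuotientAddGroup.leftRel_apply.mp h a).symm

theorem periodLift_injective {f : G → α}
    (hf : ∀ p q r, f p = f q → f (p + r) = f (q + r)) : Function.Injective (periodLift f) := by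
  rintro ⟨p⟩ ⟨q⟩ h
  refine QuotientAddGroup.eq.2 ?_
  rw [neg_add_eq_sub, ← neg_sub]
  exact neg_mem ((eq_iff_sub_mem_periodSubgroup hf).1 h)

end Periods

abbrev Torus (τ σ : ℕ) : Type := ZMod τ × ZMod σ

section Torus

variable {n τ σ : ℕ} {T : ℕ → ℕ → Fin n}

def torusFun (τ σ : ℕ) (T : ℕ → ℕ → Fin n) : Torus τ σ → Fin n :=
  fun p => T p.1.val p.2.val

def quotientTile (Λ : AddSubgroup (Torus τ σ)) (ψ : Torus τ σ ⧸ Λ → Fin n) :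
    ℕ → ℕ → Fin n :=
  fun i j => ψ ((i : ZMod τ), (j : ZMod σ))

theorem IsTilePeriodic.torusFun_natCast (hT : IsTilePeriodic τ σ T) (i j : ℕ) :
    torusFun τ σ T ((i : ZMod τ), (j : ZMod σ)) = T i j := by
  simp only [torusFun, ZMod.val_natCast, ← hT.apply_mod]

theorem IsTilePeriodic.quotientTile_periodLift (hT : IsTilePeriodic τ σ T) :
    quotientTile (periodSubgroup (torusFun τ σ T)) (periodLift (torusFun τ σ T)) = T := by
  funext i j
  exact hT.torusFun_natCast i j

variable {Λ : AddSubgroup (Torus τ σ)} {ψ : Torus τ σ ⧸ Λ → Fin n}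

theorem isTilePeriodic_quotientTile : IsTilePeriodic τ σ (quotientTile Λ ψ) := by
  constructor <;> intro i j <;> simp [quotientTile]

variable [NeZero τ] [NeZero σ]

theorem torusFun_quotientTile (p : Torus τ σ) :
    torusFun τ σ (quotientTile Λ ψ) p = ψ p := by
  simp [torusFun, quotientTile]

theorem IsTilePeriodic.torusFun_add (hT : IsTilePeriodic τ σ T) (p : Torus τ σ)
    (i j : ℕ) :
    torusFun τ σ T (p + ((i : ZMod τ), (j : ZMod σ))) = T (p.1.val + i) (p.2.val + j) := by
  rw [← hT.torusFun_natCast]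
  push_cast
  simp only [ZMod.natCast_zmod_val]
  rfl

theorem IsSimpleTile.torusFun_add_eq (hs : IsSimpleTile n τ σ T) (hT : IsPSTile n τ σ T)
    (p q r : Torus τ σ) (h : torusFun τ σ T p = torusFun τ σ T q) :
    torusFun τ σ T (p + r) = torusFun τ σ T (q + r) := by
  obtain ⟨a, b⟩ := r
  rw [← ZMod.natCast_zmod_val a, ← ZMod.natCast_zmod_val b, hT.1.torusFun_add,
    hT.1.torusFun_add]
  exact hs.apply_add_eq hT (Nat.pos_of_neZero τ) (Nat.pos_of_neZero σ) h _ _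

theorem IsTilePeriodic.torusFun_of_shift {T' : ℕ → ℕ → Fin n} (hT : IsTilePeriodic τ σ T)
    {r c : ℕ} (hshift : ∀ i j, T' i j = T (i + r) (j + c)) (p : Torus τ σ) :
    torusFun τ σ T' p = torusFun τ σ T (p + ((r : ZMod τ), (c : ZMod σ))) := by
  rw [hT.torusFun_add, torusFun, hshift]

theorem IsTilePeriodic.tileStates_eq (hT : IsTilePeriodic τ σ T) :
    tileStates n τ σ T = Finset.univ.image (torusFun τ σ T) := by
  ext s
  simp only [tileStates, Finset.mem_image, Finset.mem_product, Finset.mem_range,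
    Finset.mem_univ, true_and, Prod.exists]
  constructor
  · rintro ⟨i, j, -, rfl⟩
    exact ⟨i, j, hT.torusFun_natCast i j⟩
  · rintro ⟨a, b, rfl⟩
    exact ⟨a.val, b.val, ⟨ZMod.val_lt a, ZMod.val_lt b⟩, rfl⟩

end Torus

section Axes

variable {n τ σ : ℕ}

def TrivialOnAxes (Λ : AddSubgroup (Torus τ σ)) : Prop :=
  (∀ a : ZMod τ, (a, 0) ∈ Λ → a = 0) ∧ ∀ b : ZMod σ, (0, b) ∈ Λ → b = 0

variable {Λ : AddSubgroup (Torus τ σ)} {ψ : Torus τ σ ⧸ Λ → Fin n}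

theorem TrivialOnAxes.modEq_of_mk_eq_left (hΛ : TrivialOnAxes Λ) {i i' j : ℕ}
    (h : (((i : ZMod τ), (j : ZMod σ)) : Torus τ σ ⧸ Λ) = ((i' : ZMod τ), (j : ZMod σ))) :
    i ≡ i' [MOD τ] := by
  have hmem := QuotientAddGroup.eq.1 h
  rw [Prod.neg_mk, Prod.mk_add_mk, neg_add_cancel] at hmem
  rw [← ZMod.natCast_eq_natCast_iff, ← neg_add_eq_zero]
  exact hΛ.1 _ hmem

theorem TrivialOnAxes.modEq_of_mk_eq_right (hΛ : TrivialOnAxes Λ) {i j j' : ℕ}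
    (h : (((i : ZMod τ), (j : ZMod σ)) : Torus τ σ ⧸ Λ) = ((i : ZMod τ), (j' : ZMod σ))) :
    j ≡ j' [MOD σ] := by
  have hmem := QuotientAddGroup.eq.1 h
  rw [Prod.neg_mk, Prod.mk_add_mk, neg_add_cancel] at hmem
  rw [← ZMod.natCast_eq_natCast_iff, ← neg_add_eq_zero]
  exact hΛ.2 _ hmem

theorem isPSTile_quotientTile (hψ : Function.Injective ψ) (hΛ : TrivialOnAxes Λ) :
    IsPSTile n τ σ (quotientTile Λ ψ) := by
  refine ⟨isTilePeriodic_quotientTile, fun i j k m h _ => ?_, fun i σ' hσ' hper => ?_,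
    fun τ' hτ' hper => ?_⟩
  · simp only [quotientTile, Nat.cast_succ, ← Prod.mk_add_mk, QuotientAddGroup.mk_add, hψ h]
  · have h0 : σ' ≡ 0 [MOD σ] := hΛ.modEq_of_mk_eq_right (hψ (zero_add σ' ▸ hper 0))
    exact Nat.le_of_dvd hσ' (Nat.modEq_zero_iff_dvd.1 h0)
  · have h0 : τ' ≡ 0 [MOD τ] := hΛ.modEq_of_mk_eq_left (hψ (zero_add τ' ▸ hper 0 0))
    exact Nat.le_of_dvd hτ' (Nat.modEq_zero_iff_dvd.1 h0)

theorem isSimpleTile_quotientTile [NeZero τ] [NeZero σ] (hψ : Function.Injective ψ) :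
    IsSimpleTile n τ σ (quotientTile Λ ψ) := by
  refine (isSimpleTile_iff isTilePeriodic_quotientTile (Nat.pos_of_neZero τ)
    (Nat.pos_of_neZero σ)).2 fun {i j k m} h => ?_
  have hsucc : ∀ a b : ℕ, (((a : ZMod τ), ((b + 1 : ℕ) : ZMod σ)) : Torus τ σ ⧸ Λ) =
      (((a : ZMod τ), (b : ZMod σ)) : Torus τ σ ⧸ Λ) + ((0, 1) : Torus τ σ) :=
    fun a b => by rw [← QuotientAddGroup.mk_add, Prod.mk_add_mk, add_zero, Nat.cast_succ]
  simp only [quotientTile, hsucc, hψ h]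

theorem IsTilePeriodic.apply_add_val {T : ℕ → ℕ → Fin n} [NeZero τ] [NeZero σ]
    (hT : IsTilePeriodic τ σ T) {g : Torus τ σ} (hg : g ∈ periodSubgroup (torusFun τ σ T))
    (i j : ℕ) : T (g.1.val + i) (g.2.val + j) = T i j := by
  rw [← hT.torusFun_add, add_comm, hg, hT.torusFun_natCast]

theorem IsPSTile.trivialOnAxes {T : ℕ → ℕ → Fin n} [NeZero τ] [NeZero σ]
    (hT : IsPSTile n τ σ T) : TrivialOnAxes (periodSubgroup (torusFun τ σ T)) := by
  refine ⟨fun a ha => ?_, fun b hb => ?_⟩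
  · by_contra hne
    have hper : ∀ i j, T (i + a.val) j = T i j := fun i j => by
      simpa [add_comm] using hT.1.apply_add_val ha i j
    exact (ZMod.val_lt a).not_ge (hT.2.2.2 _ (ZMod.val_pos.2 hne) hper)
  · by_contra hne
    have hper : ∀ j, T 0 (j + b.val) = T 0 j := fun j => by
      simpa [add_comm] using hT.1.apply_add_val hb 0 j
    exact (ZMod.val_lt b).not_ge (hT.2.2.1 0 _ (ZMod.val_pos.2 hne) hper)

end Axes

section Rank

variable {n τ σ : ℕ}

def columnStates (τ : ℕ) (T : ℕ → ℕ → Fin n) (j : ℕ) : Finset (Fin n) :=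
  (Finset.range τ).image fun i => T i j

theorem image_product_eq_biUnion_columnStates (T : ℕ → ℕ → Fin n) (J : Finset ℕ) :
    ((J ×ˢ Finset.range τ).image fun p => T p.2 p.1) = J.biUnion (columnStates τ T) := by
  ext s
  simp [columnStates, and_assoc]

variable {Λ : AddSubgroup (Torus τ σ)}

theorem TrivialOnAxes.injOn_snd (hΛ : TrivialOnAxes Λ) :
    Set.InjOn Prod.snd (Λ : Set (Torus τ σ)) := by
  intro p hp q hq h
  have hmem := Λ.sub_mem hp hq
  rw [show p - q = (p.1 - q.1, 0) from Prod.ext rfl (sub_eq_zero.2 h)] at hmem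
  exact Prod.ext (sub_eq_zero.1 (hΛ.1 _ hmem)) h

theorem TrivialOnAxes.injOn_fst (hΛ : TrivialOnAxes Λ) :
    Set.InjOn Prod.fst (Λ : Set (Torus τ σ)) := by
  intro p hp q hq h
  have hmem := Λ.sub_mem hp hq
  rw [show p - q = (0, p.2 - q.2) from Prod.ext (sub_eq_zero.2 h) rfl] at hmem
  exact Prod.ext h (sub_eq_zero.1 (hΛ.2 _ hmem))

theorem TrivialOnAxes.card_map_snd (hΛ : TrivialOnAxes Λ) :
    Nat.card (Λ.map (AddMonoidHom.snd (ZMod τ) (ZMod σ))) = Nat.card Λ :=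
  Nat.card_image_of_injOn hΛ.injOn_snd

theorem TrivialOnAxes.card_map_fst (hΛ : TrivialOnAxes Λ) :
    Nat.card (Λ.map (AddMonoidHom.fst (ZMod τ) (ZMod σ))) = Nat.card Λ :=
  Nat.card_image_of_injOn hΛ.injOn_fst

abbrev columnClass (Λ : AddSubgroup (Torus τ σ)) (j : ℕ) :
    ZMod σ ⧸ Λ.map (AddMonoidHom.snd (ZMod τ) (ZMod σ)) :=
  ((j : ZMod σ) : ZMod σ ⧸ Λ.map (AddMonoidHom.snd (ZMod τ) (ZMod σ)))

theorem card_quotient_map_snd_mul [NeZero σ] (hΛ : TrivialOnAxes Λ) :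
    Nat.card (ZMod σ ⧸ Λ.map (AddMonoidHom.snd (ZMod τ) (ZMod σ))) * Nat.card Λ = σ := by
  rw [← hΛ.card_map_snd, ← AddSubgroup.card_eq_card_quotient_mul_card_addSubgroup,
    Nat.card_zmod]

variable {ψ : Torus τ σ ⧸ Λ → Fin n}

theorem card_columnStates_quotientTile (hψ : Function.Injective ψ) (hΛ : TrivialOnAxes Λ)
    (j : ℕ) : (columnStates τ (quotientTile Λ ψ) j).card = τ := by
  rw [columnStates, Finset.card_image_of_injOn, Finset.card_range]
  intro i hi i' hi' h
  simpa [Nat.ModEq, Nat.mod_eq_of_lt (Finset.mem_range.1 hi),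
    Nat.mod_eq_of_lt (Finset.mem_range.1 hi')] using hΛ.modEq_of_mk_eq_left (hψ h)

theorem disjoint_columnStates_quotientTile (hψ : Function.Injective ψ) {j j' : ℕ}
    (h : columnClass Λ j ≠ columnClass Λ j') :
    Disjoint (columnStates τ (quotientTile Λ ψ) j)
      (columnStates τ (quotientTile Λ ψ) j') := by
  simp only [Finset.disjoint_left, columnStates, Finset.mem_image]
  rintro _ ⟨i, -, rfl⟩ ⟨i', -, hii'⟩
  refine h (QuotientAddGroup.eq.2 (AddSubgroup.mem_map.2
    ⟨_, QuotientAddGroup.eq.1 (hψ hii').symm, ?_⟩))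
  simp

theorem card_biUnion_columnStates_of_injOn (hψ : Function.Injective ψ) (hΛ : TrivialOnAxes Λ)
    {J : Finset ℕ} (h : Set.InjOn (columnClass Λ) J) :
    (J.biUnion (columnStates τ (quotientTile Λ ψ))).card = J.card * τ := by
  rw [Finset.card_biUnion fun j hj j' hj' hne =>
      disjoint_columnStates_quotientTile hψ fun hc => hne (h hj hj' hc),
    Finset.sum_congr rfl fun j _ => card_columnStates_quotientTile hψ hΛ j, Finset.sum_const,
    smul_eq_mul]

theorem columnClass_eq_nsmul (j : ℕ) : columnClass Λ j = j • columnClass Λ 1 := by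
  rw [columnClass, columnClass, ← QuotientAddGroup.mk_nsmul, Nat.cast_one, nsmul_one]

theorem addOrderOf_columnClass_one [NeZero σ] :
    addOrderOf (columnClass Λ 1) =
      Nat.card (ZMod σ ⧸ Λ.map (AddMonoidHom.snd (ZMod τ) (ZMod σ))) := by
  refine addOrderOf_eq_card_of_forall_mem_zmultiples fun q => ?_
  induction q using QuotientAddGroup.induction_on with | H z => ?_
  refine AddSubgroup.mem_zmultiples_iff.2 ⟨z.val, ?_⟩
  rw [natCast_zsmul, ← columnClass_eq_nsmul, columnClass, ZMod.natCast_zmod_val]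

variable [NeZero τ]

theorem columnStates_quotientTile_subset {j j' : ℕ}
    (h : columnClass Λ j = columnClass Λ j') :
    columnStates τ (quotientTile Λ ψ) j ⊆ columnStates τ (quotientTile Λ ψ) j' := by
  obtain ⟨⟨a, b⟩, hab, hb⟩ := AddSubgroup.mem_map.1 (QuotientAddGroup.eq.1 h)
  simp only [columnStates, Finset.subset_iff, Finset.mem_image, Finset.mem_range]
  rintro _ ⟨i, -, rfl⟩
  refine ⟨((i : ZMod τ) + a).val, ZMod.val_lt _, congrArg ψ (QuotientAddGroup.eq.2 ?_)⟩
  simp only [AddMonoidHom.coe_snd] at hb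
  simpa [hb, add_comm] using Λ.neg_mem hab

theorem injOn_columnClass_of_card_biUnion (hψ : Function.Injective ψ) (hΛ : TrivialOnAxes Λ)
    {J : Finset ℕ} (h : (J.biUnion (columnStates τ (quotientTile Λ ψ))).card = J.card * τ) :
    Set.InjOn (columnClass Λ) J := by
  intro j hj j' hj' hjj'
  by_contra hne
  have hsub : J.biUnion (columnStates τ (quotientTile Λ ψ)) ⊆
      (J.erase j).biUnion (columnStates τ (quotientTile Λ ψ)) := by
    intro s hs
    obtain ⟨u, hu, hsu⟩ := Finset.mem_biUnion.1 hs
    by_cases huj : u = j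
    · subst huj
      exact Finset.mem_biUnion.2 ⟨j', Finset.mem_erase.2 ⟨Ne.symm hne, hj'⟩,
        columnStates_quotientTile_subset hjj' hsu⟩
    · exact Finset.mem_biUnion.2 ⟨u, Finset.mem_erase.2 ⟨huj, hu⟩, hsu⟩
  have hle := (Finset.card_le_card hsub).trans (Finset.card_biUnion_le_card_mul _ _ τ
    fun u _ => (card_columnStates_quotientTile hψ hΛ u).le)
  rw [h, Finset.card_erase_of_mem hj] at hle
  have hJ : 0 < J.card := Finset.card_pos.2 ⟨j, hj⟩
  have hτ : 0 < τ := Nat.pos_of_neZero τ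
  nlinarith [Nat.sub_add_cancel hJ]

/-- The rank of a canonical tile is the number of distinct column state sets. -/
theorem tileRank_quotientTile [NeZero σ] (hψ : Function.Injective ψ) (hΛ : TrivialOnAxes Λ) :
    tileRank n τ σ (quotientTile Λ ψ) =
      Nat.card (ZMod σ ⧸ Λ.map (AddMonoidHom.snd (ZMod τ) (ZMod σ))) := by
  classical
  set r := Nat.card (ZMod σ ⧸ Λ.map (AddMonoidHom.snd (ZMod τ) (ZMod σ)))
  have : Fintype (ZMod σ ⧸ Λ.map (AddMonoidHom.snd (ZMod τ) (ZMod σ))) := Fintype.ofFinite _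
  suffices hset : {x : ℕ | ∃ J : Finset ℕ, J ⊆ Finset.range σ ∧ J.card = x ∧
      ((J ×ˢ Finset.range τ).image fun p => quotientTile Λ ψ p.2 p.1).card = x * τ} =
      Set.Iic r by
    rw [tileRank, hset, csSup_Iic]
  ext x
  simp only [image_product_eq_biUnion_columnStates, Set.mem_Iic]
  constructor
  · rintro ⟨J, -, rfl, hJ⟩
    have hle := Finset.card_le_card_of_injOn (t := Finset.univ) _ (fun _ _ => Finset.mem_univ _)
      (injOn_columnClass_of_card_biUnion hψ hΛ hJ)
    rwa [Finset.card_univ, ← Nat.card_eq_fintype_card] at hle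
  · intro hx
    have hrσ : r ≤ σ := (Nat.card_le_card_of_surjective _ QuotientAddGroup.mk_surjective).trans
      (Nat.card_zmod σ).le
    have hlt : ∀ {i}, i ∈ (Finset.range x : Set ℕ) → i < addOrderOf (columnClass Λ 1) :=
      fun hi => addOrderOf_columnClass_one (Λ := Λ) ▸ (Finset.mem_range.1 hi).trans_le hx
    have hinj : Set.InjOn (columnClass Λ) (Finset.range x : Set ℕ) := fun j hj j' hj' h => by
      rw [columnClass_eq_nsmul j, columnClass_eq_nsmul j'] at h
      exact nsmul_injOn_Iio_addOrderOf (hlt hj) (hlt hj') h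
    exact ⟨Finset.range x, Finset.range_subset_range.2 (hx.trans hrσ), Finset.card_range x,
      by rw [card_biUnion_columnStates_of_injOn hψ hΛ hinj, Finset.card_range]⟩

end Rank

section RankXTile

variable {n τ σ : ℕ}

def ValidPeriods (τ σ : ℕ) : Type :=
  {Λ : AddSubgroup (Torus τ σ) // TrivialOnAxes Λ ∧ Nat.card Λ = Nat.gcd τ σ}

theorem ValidPeriods.card_quotient [NeZero τ] (L : ValidPeriods τ σ) :
    Nat.card (Torus τ σ ⧸ L.1) = Nat.lcm τ σ := by
  have h := AddSubgroup.card_eq_card_quotient_mul_card_addSubgroup L.1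
  rw [Nat.card_prod, Nat.card_zmod, Nat.card_zmod, L.2.2, ← Nat.gcd_mul_lcm τ σ, mul_comm] at h
  exact (Nat.eq_of_mul_eq_mul_right (Nat.gcd_pos_of_pos_left σ (Nat.pos_of_neZero τ)) h).symm

variable [NeZero τ] [NeZero σ]

theorem tileRank_quotientTile_eq_iff {Λ : AddSubgroup (Torus τ σ)}
    {ψ : Torus τ σ ⧸ Λ → Fin n} (hψ : Function.Injective ψ) (hΛ : TrivialOnAxes Λ) :
    tileRank n τ σ (quotientTile Λ ψ) = σ / Nat.gcd τ σ ↔ Nat.card Λ = Nat.gcd τ σ := by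
  have hmul := card_quotient_map_snd_mul hΛ
  have hd : 0 < Nat.gcd τ σ := Nat.gcd_pos_of_pos_left σ (Nat.pos_of_neZero τ)
  rw [tileRank_quotientTile hψ hΛ]
  constructor
  · intro h
    rw [h] at hmul
    have hσd : 0 < σ / Nat.gcd τ σ :=
      Nat.div_pos (Nat.le_of_dvd (Nat.pos_of_neZero σ) (Nat.gcd_dvd_right τ σ)) hd
    exact Nat.eq_of_mul_eq_mul_left hσd
      (hmul.trans (Nat.div_mul_cancel (Nat.gcd_dvd_right τ σ)).symm)
  · intro h
    rw [h] at hmul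
    exact (Nat.div_eq_of_eq_mul_left hd hmul.symm).symm

def RankXTile.ofEmbedding (L : ValidPeriods τ σ) (ψ : Torus τ σ ⧸ L.1 ↪ Fin n) :
    RankXTile n τ σ :=
  ⟨quotientTile L.1 ψ, isPSTile_quotientTile ψ.injective L.2.1,
    isSimpleTile_quotientTile ψ.injective,
    (tileRank_quotientTile_eq_iff ψ.injective L.2.1).2 L.2.2⟩

theorem RankXTile.injective_periodLift (T : RankXTile n τ σ) :
    Function.Injective (periodLift (torusFun τ σ T.1)) :=
  periodLift_injective (T.2.2.1.torusFun_add_eq T.2.1)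

def RankXTile.periods (T : RankXTile n τ σ) : ValidPeriods τ σ :=
  ⟨periodSubgroup (torusFun τ σ T.1), T.2.1.trivialOnAxes, by
    rw [← tileRank_quotientTile_eq_iff T.injective_periodLift T.2.1.trivialOnAxes,
      T.2.1.1.quotientTile_periodLift]
    exact T.2.2.2⟩

def RankXTile.embedding (T : RankXTile n τ σ) : Torus τ σ ⧸ T.periods.1 ↪ Fin n :=
  ⟨periodLift (torusFun τ σ T.1), T.injective_periodLift⟩

theorem RankXTile.ofEmbedding_periods_embedding (T : RankXTile n τ σ) :
    RankXTile.ofEmbedding T.periods T.embedding = T :=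
  Subtype.ext T.2.1.1.quotientTile_periodLift

theorem RankXTile.periods_ofEmbedding (L : ValidPeriods τ σ)
    (ψ : Torus τ σ ⧸ L.1 ↪ Fin n) : (RankXTile.ofEmbedding L ψ).periods.1 = L.1 := by
  show periodSubgroup (torusFun τ σ (quotientTile L.1 ψ)) = L.1
  rw [show torusFun τ σ (quotientTile L.1 ψ) = fun p : Torus τ σ => ψ p from
    funext torusFun_quotientTile]
  exact periodSubgroup_comp_mk ψ.injective

end RankXTile

section Inclusion

variable {d N : ℕ}

/-- `ZMod d` as the subgroup of `ZMod N` generated by `N / d`. -/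
def zmodInclusion (hd : d ∣ N) : ZMod d →+ ZMod N :=
  AddMonoidHom.mk' (fun y => ((N / d * y.val : ℕ) : ZMod N)) fun y z => by
    rcases Nat.eq_zero_or_pos d with rfl | hd0
    · simp only [Nat.div_zero, zero_mul, Nat.cast_zero, add_zero]
    · have : NeZero d := ⟨hd0.ne'⟩
      rw [ZMod.val_add, ← Nat.mul_mod_mul_left, Nat.div_mul_cancel hd, ZMod.natCast_mod]
      push_cast
      ring

variable [NeZero d] [NeZero N]

theorem val_zmodInclusion (hd : d ∣ N) (y : ZMod d) :
    (zmodInclusion hd y).val = N / d * y.val := by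
  refine ZMod.val_natCast_of_lt ?_
  calc N / d * y.val < N / d * d :=
        Nat.mul_lt_mul_of_pos_left (ZMod.val_lt y)
          (Nat.div_pos (Nat.le_of_dvd (Nat.pos_of_neZero N) hd) (Nat.pos_of_neZero d))
    _ = N := Nat.div_mul_cancel hd

theorem zmodInclusion_injective (hd : d ∣ N) : Function.Injective (zmodInclusion hd) := by
  intro y z h
  have hval := congrArg ZMod.val h
  rw [val_zmodInclusion, val_zmodInclusion] at hval
  exact ZMod.val_injective d (Nat.eq_of_mul_eq_mul_left
    (Nat.div_pos (Nat.le_of_dvd (Nat.pos_of_neZero N) hd) (Nat.pos_of_neZero d)) hval)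

theorem card_range_zmodInclusion (hd : d ∣ N) : Nat.card (zmodInclusion hd).range = d :=
  (Nat.card_range_of_injective (zmodInclusion_injective hd)).trans (Nat.card_zmod d)

theorem mem_range_zmodInclusion (hd : d ∣ N) {a : ZMod N} (ha : d • a = 0) :
    a ∈ (zmodInclusion hd).range := by
  have hdvd : N / d ∣ a.val := by
    have hN : N ∣ d * a.val := by
      rw [← ZMod.natCast_eq_zero_iff, Nat.cast_mul, ZMod.natCast_zmod_val, ← nsmul_eq_mul, ha]
    refine Nat.dvd_of_mul_dvd_mul_left (Nat.pos_of_neZero d) ?_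
    rwa [Nat.mul_div_cancel' hd]
  refine ⟨(a.val / (N / d) : ℕ), ?_⟩
  apply ZMod.val_injective N
  rw [val_zmodInclusion, ZMod.val_natCast_of_lt, Nat.mul_div_cancel' hdvd]
  rw [Nat.div_lt_iff_lt_mul (Nat.div_pos (Nat.le_of_dvd (Nat.pos_of_neZero N) hd)
    (Nat.pos_of_neZero d)), Nat.mul_comm, Nat.div_mul_cancel hd]
  exact ZMod.val_lt a

end Inclusion

section CountPeriods

variable {τ σ : ℕ}

def graphHom (τ σ : ℕ) (w : ZMod (Nat.gcd τ σ)) : ZMod (Nat.gcd τ σ) →+ Torus τ σ :=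
  (zmodInclusion (Nat.gcd_dvd_left τ σ)).prod
    ((zmodInclusion (Nat.gcd_dvd_right τ σ)).comp (AddMonoidHom.mulLeft w))

theorem graphHom_apply (w y : ZMod (Nat.gcd τ σ)) :
    graphHom τ σ w y =
      (zmodInclusion (Nat.gcd_dvd_left τ σ) y, zmodInclusion (Nat.gcd_dvd_right τ σ) (w * y)) :=
  rfl

theorem ValidPeriods.nsmul_gcd_eq_zero (L : ValidPeriods τ σ) {p : Torus τ σ}
    (hp : p ∈ L.1) : Nat.gcd τ σ • p = 0 := by
  have h : Nat.card L.1 • (⟨p, hp⟩ : L.1) = 0 := card_nsmul_eq_zero'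
  rw [L.2.2] at h
  simpa using congrArg Subtype.val h

variable [NeZero τ]

instance : NeZero (Nat.gcd τ σ) := ⟨(Nat.gcd_pos_of_pos_left σ (Nat.pos_of_neZero τ)).ne'⟩

theorem card_range_graphHom (w : ZMod (Nat.gcd τ σ)) :
    Nat.card (graphHom τ σ w).range = Nat.gcd τ σ :=
  (Nat.card_range_of_injective fun _ _ h =>
    zmodInclusion_injective (Nat.gcd_dvd_left τ σ) (congrArg Prod.fst h)).trans (Nat.card_zmod _)

theorem ValidPeriods.map_fst_eq (L : ValidPeriods τ σ) :
    L.1.map (AddMonoidHom.fst (ZMod τ) (ZMod σ)) =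
      (zmodInclusion (Nat.gcd_dvd_left τ σ)).range := by
  refine AddSubgroup.eq_of_le_of_card_ge ?_ ?_
  · rintro _ ⟨p, hp, rfl⟩
    exact mem_range_zmodInclusion _ (congrArg Prod.fst (L.nsmul_gcd_eq_zero hp))
  · rw [L.2.1.card_map_fst, L.2.2, card_range_zmodInclusion]

theorem isUnit_of_range_graphHom_eq {w : ZMod (Nat.gcd τ σ)} (L : ValidPeriods τ σ)
    (hw : (graphHom τ σ w).range = L.1) : IsUnit w := by
  refine IsLeftRegular.isUnit_of_finite fun y z hyz => ?_
  have hmem : graphHom τ σ w (y - z) ∈ L.1 := hw ▸ ⟨y - z, rfl⟩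
  rw [graphHom_apply, mul_sub, show w * y = w * z from hyz, sub_self, map_zero] at hmem
  exact sub_eq_zero.1 (zmodInclusion_injective _ ((L.2.1.1 _ hmem).trans (map_zero _).symm))

variable [NeZero σ]

theorem trivialOnAxes_range_graphHom (u : (ZMod (Nat.gcd τ σ))ˣ) :
    TrivialOnAxes (graphHom τ σ u).range := by
  refine ⟨?_, ?_⟩ <;> rintro _ ⟨y, hy⟩ <;> rw [graphHom_apply, Prod.mk.injEq] at hy
  · have hy0 : y = 0 := by
      have := zmodInclusion_injective _ (hy.2.trans (map_zero _).symm)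
      simpa using this
    rw [← hy.1, hy0, map_zero]
  · have hy0 : y = 0 := zmodInclusion_injective _ (hy.1.trans (map_zero _).symm)
    rw [← hy.2, hy0, mul_zero, map_zero]

def ValidPeriods.ofUnit (u : (ZMod (Nat.gcd τ σ))ˣ) : ValidPeriods τ σ :=
  ⟨(graphHom τ σ u).range, trivialOnAxes_range_graphHom u, card_range_graphHom _⟩

theorem ValidPeriods.ofUnit_injective :
    Function.Injective (ValidPeriods.ofUnit (τ := τ) (σ := σ)) := by
  intro u v huv
  have hmem : graphHom τ σ u 1 ∈ (graphHom τ σ v).range := by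
    rw [← show (graphHom τ σ u).range = (graphHom τ σ v).range from congrArg Subtype.val huv]
    exact ⟨1, rfl⟩
  obtain ⟨y, hy⟩ := hmem
  rw [graphHom_apply, graphHom_apply, Prod.mk.injEq] at hy
  obtain rfl := zmodInclusion_injective _ hy.1
  simpa [Units.ext_iff] using (zmodInclusion_injective _ hy.2).symm

/-- A valid subgroup contains some `graphHom τ σ w 1`, whose multiples exhaust it. -/
theorem ValidPeriods.exists_range_graphHom_eq (L : ValidPeriods τ σ) :
    ∃ w, (graphHom τ σ w).range = L.1 := by
  obtain ⟨p, hp, hp1⟩ : zmodInclusion (Nat.gcd_dvd_left τ σ) 1 ∈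
      L.1.map (AddMonoidHom.fst (ZMod τ) (ZMod σ)) := L.map_fst_eq ▸ ⟨1, rfl⟩
  obtain ⟨w, hw⟩ := mem_range_zmodInclusion (Nat.gcd_dvd_right τ σ)
    (congrArg Prod.snd (L.nsmul_gcd_eq_zero hp))
  refine ⟨w, AddSubgroup.eq_of_le_of_card_ge ?_ ?_⟩
  · rintro _ ⟨y, rfl⟩
    have hy : graphHom τ σ w y = y.val • p := by
      refine Prod.ext ?_ ?_
      · rw [Prod.smul_fst, show p.1 = _ from hp1, ← map_nsmul, nsmul_eq_mul, mul_one,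
          ZMod.natCast_zmod_val]
        rfl
      · rw [Prod.smul_snd, ← hw, ← map_nsmul, nsmul_eq_mul, ZMod.natCast_zmod_val, mul_comm]
        rfl
    exact hy ▸ L.1.nsmul_mem hp _
  · rw [L.2.2, card_range_graphHom]

theorem ValidPeriods.ofUnit_surjective :
    Function.Surjective (ValidPeriods.ofUnit (τ := τ) (σ := σ)) := by
  intro L
  obtain ⟨w, hw⟩ := L.exists_range_graphHom_eq
  exact ⟨(isUnit_of_range_graphHom_eq L hw).unit, Subtype.ext hw⟩

/-- A valid subgroup is the graph of an automorphism of the cyclic group of order `gcd τ σ`. -/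
theorem card_validPeriods : Nat.card (ValidPeriods τ σ) = Nat.totient (Nat.gcd τ σ) := by
  rw [← Nat.card_congr (Equiv.ofBijective _ ⟨ValidPeriods.ofUnit_injective,
    ValidPeriods.ofUnit_surjective⟩), Nat.card_eq_fintype_card, ZMod.card_units_eq_totient]

end CountPeriods

section Cardinalities

variable {α : Type*}

theorem Nat.card_subtype_comp_eq_mul {β : Type*} [Finite α] [Finite β] (g : α → β)
    (P : β → Prop) {N : ℕ} (hN : ∀ b, P b → Nat.card {a // g a = b} = N) :
    Nat.card {a // P (g a)} = Nat.card {b // P b} * N := by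
  have : Fintype {b // P b} := Fintype.ofFinite _
  rw [← Nat.card_congr (Equiv.sigmaSubtypeFiberEquivSubtype g fun _ => Iff.rfl),
    Nat.card_sigma, Finset.sum_congr rfl fun b _ => hN b.1 b.2, Finset.sum_const, smul_eq_mul,
    Finset.card_univ, Nat.card_eq_fintype_card]

def Equiv.subtypeSigmaEquivSigmaSubtype {ι : Type*} {F : ι → Type*} (P : ∀ i, F i → Prop) :
    {s : Σ i, F i // P s.1 s.2} ≃ Σ i, {x : F i // P i x} where
  toFun s := ⟨s.1.1, s.1.2, s.2⟩
  invFun s := ⟨⟨s.1, s.2.1⟩, s.2.2⟩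
  left_inv _ := rfl
  right_inv _ := rfl

theorem card_embedding_map_univ_eq {Q : Type*} [Fintype Q] (S : Finset α)
    (hS : S.card = Fintype.card Q) :
    Nat.card {ψ : Q ↪ α // Finset.univ.map ψ = S} = (Fintype.card Q).factorial := by
  have hmem : ∀ (ψ : {ψ : Q ↪ α // Finset.univ.map ψ = S}) q, ψ.1 q ∈ S := fun ψ q =>
    (Finset.ext_iff.1 ψ.2 _).1 (Finset.mem_map_of_mem _ (Finset.mem_univ q))
  let e : {ψ : Q ↪ α // Finset.univ.map ψ = S} ≃ (Q ↪ S) :=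
    { toFun := fun ψ => ⟨fun q => ⟨ψ.1 q, hmem ψ q⟩,
        fun _ _ h => ψ.1.injective (congrArg Subtype.val h)⟩
      invFun := fun e => ⟨e.trans (Function.Embedding.subtype _), Finset.eq_of_subset_of_card_le
        (fun a ha => by obtain ⟨q, -, rfl⟩ := Finset.mem_map.1 ha; exact (e q).2)
        (by rw [hS, Finset.card_map, Finset.card_univ])⟩
      left_inv := fun _ => rfl
      right_inv := fun _ => rfl }
  rw [Nat.card_congr e, Nat.card_eq_fintype_card, Fintype.card_embedding_eq, Fintype.card_coe, hS,
    Nat.descFactorial_self]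

theorem Nat.card_subtype_ne_and [Finite α] {P : α → Prop} {a : α} (ha : P a) :
    Nat.card {b // a ≠ b ∧ P b} = Nat.card {b // P b} - 1 := by
  have hset : {b | a ≠ b ∧ P b} = {b | P b} \ {a} := by
    ext b
    simp only [Set.mem_ofPred_eq, Set.mem_sdiff, Set.mem_singleton_iff]
    tauto
  change Nat.card {b | a ≠ b ∧ P b} = Nat.card {b | P b} - 1
  rw [Nat.card_coe_set_eq, Nat.card_coe_set_eq, hset,
    Set.ncard_sdiff_singleton_of_mem (s := {b | P b}) ha]

theorem Nat.card_subtype_prod_eq_mul [Finite α] (R : α → α → Prop) {c : ℕ}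
    (h : ∀ a, Nat.card {b // R a b} = c) :
    Nat.card {p : α × α // R p.1 p.2} = Nat.card α * c := by
  have : Fintype α := Fintype.ofFinite α
  rw [Nat.card_congr (Equiv.subtypeProdEquivSigmaSubtype R), Nat.card_sigma,
    Finset.sum_congr rfl fun a _ => h a, Finset.sum_const, Finset.card_univ, smul_eq_mul,
    Nat.card_eq_fintype_card]

theorem Finset.card_inter_eq_iff_eq [DecidableEq α] {s t : Finset α} {k : ℕ} (hs : s.card = k)
    (ht : t.card = k) : (s ∩ t).card = k ↔ s = t := by
  refine ⟨fun h => ?_, fun h => by rw [h, Finset.inter_self, ht]⟩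
  exact (Finset.eq_of_subset_of_card_le Finset.inter_subset_left (by rw [h, hs])).symm.trans
    (Finset.eq_of_subset_of_card_le Finset.inter_subset_right (by rw [h, ht]))

theorem Finset.inter_union_of_subset_compl [Fintype α] [DecidableEq α] {S₀ A B : Finset α}
    (hA : A ⊆ S₀) (hB : B ⊆ S₀ᶜ) : S₀ ∩ (A ∪ B) = A := by
  ext x
  have h1 := @hA x
  have h2 := @hB x
  simp only [Finset.mem_inter, Finset.mem_union, Finset.mem_compl] at h1 h2 ⊢
  tauto

theorem Finset.union_sdiff_of_subset_compl [Fintype α] [DecidableEq α] {S₀ A B : Finset α}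
    (hA : A ⊆ S₀) (hB : B ⊆ S₀ᶜ) : (A ∪ B) \ S₀ = B := by
  ext x
  have h1 := @hA x
  have h2 := @hB x
  simp only [Finset.mem_sdiff, Finset.mem_union, Finset.mem_compl] at h1 h2 ⊢
  tauto

/-- A `k`-set meeting `S₀` in `m` points is a choice of `m` points of `S₀` and `k - m` points
outside it. -/
theorem card_finset_card_inter_eq [Fintype α] [DecidableEq α] (S₀ : Finset α) {k m : ℕ}
    (hm : m ≤ k) :
    Nat.card {S : Finset α // S.card = k ∧ (S₀ ∩ S).card = m} =
      S₀.card.choose m * (Fintype.card α - S₀.card).choose (k - m) := by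
  let e : {S : Finset α // S.card = k ∧ (S₀ ∩ S).card = m} ≃
      (Finset.powersetCard m S₀) × (Finset.powersetCard (k - m) S₀ᶜ) :=
    { toFun := fun S =>
        (⟨S₀ ∩ S.1, Finset.mem_powersetCard.2 ⟨Finset.inter_subset_left, S.2.2⟩⟩,
        ⟨S.1 \ S₀, Finset.mem_powersetCard.2 ⟨fun x hx => Finset.mem_compl.2
          (Finset.mem_sdiff.1 hx).2, by
            have := Finset.card_inter_add_card_sdiff S.1 S₀
            rw [Finset.inter_comm, S.2.1, S.2.2] at this
            omega⟩⟩)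
      invFun := fun AB => ⟨AB.1.1 ∪ AB.2.1, by
        obtain ⟨hA, hAcard⟩ := Finset.mem_powersetCard.1 AB.1.2
        obtain ⟨hB, hBcard⟩ := Finset.mem_powersetCard.1 AB.2.2
        have hdisj : Disjoint AB.1.1 AB.2.1 := Finset.disjoint_of_subset_right hB
          (Finset.disjoint_of_subset_left hA disjoint_compl_right)
        refine ⟨by rw [Finset.card_union_of_disjoint hdisj, hAcard, hBcard]; omega, ?_⟩
        rw [Finset.inter_union_of_subset_compl hA hB, hAcard]⟩
      left_inv := fun S => Subtype.ext (by
        ext x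
        simp only [Finset.mem_union, Finset.mem_inter, Finset.mem_sdiff]
        tauto)
      right_inv := fun AB => by
        obtain ⟨hA, -⟩ := Finset.mem_powersetCard.1 AB.1.2
        obtain ⟨hB, -⟩ := Finset.mem_powersetCard.1 AB.2.2
        exact Prod.ext (Subtype.ext (Finset.inter_union_of_subset_compl hA hB))
          (Subtype.ext (Finset.union_sdiff_of_subset_compl hA hB)) }
  rw [Nat.card_congr e, Nat.card_prod, Nat.card_eq_fintype_card, Nat.card_eq_fintype_card,
    Fintype.card_coe, Fintype.card_coe, Finset.card_powersetCard, Finset.card_powersetCard,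
    Finset.card_compl]

end Cardinalities

section Translates

variable {Q α : Type*} [AddGroup Q]

def IsTranslate (ψ ψ' : Q ↪ α) : Prop :=
  ∃ g, ∀ q, ψ' q = ψ (q + g)

theorem isTranslate_equivalence : Equivalence (IsTranslate (Q := Q) (α := α)) where
  refl _ := ⟨0, fun q => by rw [add_zero]⟩
  symm := fun ⟨g, hg⟩ => ⟨-g, fun q => by rw [hg, neg_add_cancel_right]⟩
  trans := fun ⟨g, hg⟩ ⟨g', hg'⟩ => ⟨g' + g, fun q => by rw [hg', hg, add_assoc]⟩

def translateEmbedding (ψ : Q ↪ α) (g : Q) : Q ↪ α :=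
  ⟨fun q => ψ (q + g), fun _ _ h => add_right_cancel (ψ.injective h)⟩

/-- Translations act freely on embeddings, so every class has `Nat.card Q` members. -/
theorem card_isTranslate_class [Finite Q] (c : Quot (IsTranslate (Q := Q) (α := α))) :
    Nat.card {ψ // Quot.mk _ ψ = c} = Nat.card Q := by
  obtain ⟨ψ₀, rfl⟩ := Quot.exists_rep c
  have hmk : ∀ g, Quot.mk _ (translateEmbedding ψ₀ g) = Quot.mk IsTranslate ψ₀ := fun g =>
    (Quot.sound ⟨g, fun _ => rfl⟩).symm
  refine (Nat.card_congr (Equiv.ofBijective (fun g => ⟨_, hmk g⟩) ⟨?_, ?_⟩)).symm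
  · intro g g' h
    have := DFunLike.congr_fun (congrArg Subtype.val h) 0
    simpa [translateEmbedding] using ψ₀.injective this
  · rintro ⟨ψ, hψ⟩
    obtain ⟨g, hg⟩ := (isTranslate_equivalence.eqvGen_iff).1 (Quot.eqvGen_exact hψ.symm)
    exact ⟨g, Subtype.ext (DFunLike.ext _ _ fun q => (hg q).symm)⟩

variable [Fintype Q]

def translateClassRange : Quot (IsTranslate (Q := Q) (α := α)) → Finset α :=
  Quot.lift (fun ψ => Finset.univ.map ψ) fun ψ ψ' ⟨g, hg⟩ => by
    ext a
    simp only [Finset.mem_map, Finset.mem_univ, true_and, hg]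
    exact ⟨fun ⟨q, hq⟩ => ⟨q - g, by rw [sub_add_cancel, hq]⟩,
      fun ⟨q, hq⟩ => ⟨q + g, hq⟩⟩

theorem card_translateClassRange_eq [Finite α] (S : Finset α) (hS : S.card = Fintype.card Q) :
    Nat.card {c // translateClassRange (Q := Q) c = S} = (Fintype.card Q - 1).factorial := by
  have h := Nat.card_subtype_comp_eq_mul (Quot.mk (IsTranslate (Q := Q) (α := α)))
    (fun c => translateClassRange c = S) fun c _ => card_isTranslate_class c
  change Nat.card {ψ : Q ↪ α // Finset.univ.map ψ = S} = _ at h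
  rw [card_embedding_map_univ_eq S hS, Nat.card_eq_fintype_card (α := Q),
    ← Nat.mul_factorial_pred Fintype.card_ne_zero, mul_comm] at h
  exact (Nat.eq_of_mul_eq_mul_right Fintype.card_pos h).symm

theorem card_translateClassRange (c : Quot (IsTranslate (Q := Q) (α := α))) :
    (translateClassRange c).card = Fintype.card Q := by
  induction c using Quot.ind with | mk ψ => exact (Finset.card_map ψ).trans Finset.card_univ

end Translates

section Classification

variable {n τ σ : ℕ}

/-- A tile class is a valid period subgroup together with an injective labelling of the
quotient by it, up to translation. -/
abbrev TileClassData (n τ σ : ℕ) : Type :=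
  Σ L : ValidPeriods τ σ, Quot (IsTranslate (Q := Torus τ σ ⧸ L.1) (α := Fin n))

theorem TileClassData.ext_of_translate {L₁ L₂ : ValidPeriods τ σ} (h : L₁.1 = L₂.1)
    (ψ₁ : Torus τ σ ⧸ L₁.1 ↪ Fin n) (ψ₂ : Torus τ σ ⧸ L₂.1 ↪ Fin n)
    (g : Torus τ σ) (hg : ∀ p : Torus τ σ, ψ₂ p = ψ₁ (p + g)) :
    (⟨L₁, Quot.mk _ ψ₁⟩ : TileClassData n τ σ) = ⟨L₂, Quot.mk _ ψ₂⟩ := by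
  obtain ⟨Λ, hΛ⟩ := L₁
  obtain ⟨Λ', hΛ'⟩ := L₂
  obtain rfl : Λ = Λ' := h
  refine congrArg (Sigma.mk _) (Quot.sound ⟨g, fun q => ?_⟩)
  induction q using QuotientAddGroup.induction_on with | H p => exact hg p

variable [NeZero τ] [NeZero σ]

noncomputable instance (Λ : AddSubgroup (Torus τ σ)) :
    Fintype (Torus τ σ ⧸ Λ) :=
  Fintype.ofFinite _

instance : Finite (ValidPeriods τ σ) := Subtype.finite

def TileClass.toData : TileClass n τ σ → TileClassData n τ σ :=
  Quot.lift (fun T => ⟨T.periods, Quot.mk _ T.embedding⟩) fun T₁ T₂ ⟨r, c, hrc⟩ => by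
    have hshift := funext (T₁.2.1.1.torusFun_of_shift hrc)
    refine TileClassData.ext_of_translate ?_ _ _ ((r : ZMod τ), (c : ZMod σ)) fun p => ?_
    · change periodSubgroup _ = periodSubgroup _
      rw [hshift, periodSubgroup_comp_add_right]
    · exact congrFun hshift p

def TileClass.ofData : TileClassData n τ σ → TileClass n τ σ := fun x =>
  Quot.lift (fun ψ => Quot.mk shiftRel (RankXTile.ofEmbedding x.1 ψ))
    (fun ψ ψ' ⟨g, hg⟩ => by
      induction g using QuotientAddGroup.induction_on with | H g => ?_
      refine Quot.sound ⟨g.1.val, g.2.val, fun i j => ?_⟩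
      change ψ' _ = ψ _
      rw [hg, ← QuotientAddGroup.mk_add]
      push_cast
      simp only [ZMod.natCast_zmod_val]
      rfl) x.2

noncomputable def TileClass.equivData : TileClass n τ σ ≃ TileClassData n τ σ where
  toFun := TileClass.toData
  invFun := TileClass.ofData
  left_inv t := by
    induction t using Quot.ind with | mk T => ?_
    exact congrArg (Quot.mk _) T.ofEmbedding_periods_embedding
  right_inv := by
    rintro ⟨L, c⟩
    induction c using Quot.ind with | mk ψ => ?_
    refine TileClassData.ext_of_translate (RankXTile.periods_ofEmbedding L ψ) _ _ 0 fun p => ?_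
    rw [← QuotientAddGroup.mk_add, add_zero]
    exact (torusFun_quotientTile p).symm

end Classification

section Counting

variable {n τ σ : ℕ} [NeZero τ] [NeZero σ]

def TileClass.states : TileClass n τ σ → Finset (Fin n) :=
  Quot.lift (fun T => tileStates n τ σ T.1) fun T₁ T₂ ⟨r, c, hrc⟩ => by
    rw [T₁.2.1.1.tileStates_eq, T₂.2.1.1.tileStates_eq,
      funext (T₁.2.1.1.torusFun_of_shift hrc)]
    ext s
    simp only [Finset.mem_image, Finset.mem_univ, true_and]
    exact ⟨fun ⟨p, hp⟩ => ⟨p - _, by rwa [sub_add_cancel]⟩,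
      fun ⟨p, hp⟩ => ⟨_, hp⟩⟩

theorem TileClass.states_eq_translateClassRange (t : TileClass n τ σ) :
    t.states = translateClassRange (TileClass.equivData t).2 := by
  classical
  induction t using Quot.ind with | mk T => ?_
  change tileStates n τ σ T.1 = Finset.univ.map T.embedding
  rw [T.2.1.1.tileStates_eq, Finset.map_eq_image,
    ← Finset.image_univ_of_surjective (QuotientAddGroup.mk_surjective (s := T.periods.1)),
    Finset.image_image]
  rfl

theorem TileClass.card_states (t : TileClass n τ σ) : t.states.card = Nat.lcm τ σ := by
  rw [t.states_eq_translateClassRange, card_translateClassRange, ← Nat.card_eq_fintype_card,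
    ValidPeriods.card_quotient]

theorem commonStates_iff {q₁ q₂ : TileClass n τ σ} {m : ℕ} :
    commonStates q₁ q₂ m ↔ (q₁.states ∩ q₂.states).card = m := by
  constructor
  · rintro ⟨T₁, T₂, rfl, rfl, h⟩
    exact h
  · intro h
    obtain ⟨T₁, rfl⟩ := Quot.exists_rep q₁
    obtain ⟨T₂, rfl⟩ := Quot.exists_rep q₂
    exact ⟨T₁, T₂, rfl, rfl, h⟩

theorem TileClass.card_states_eq (S : Finset (Fin n)) (hS : S.card = Nat.lcm τ σ) :
    Nat.card {t : TileClass n τ σ // t.states = S} =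
      Nat.totient (Nat.gcd τ σ) * (Nat.lcm τ σ - 1).factorial := by
  have : Fintype (ValidPeriods τ σ) := Fintype.ofFinite _
  have e : {t : TileClass n τ σ // t.states = S} ≃ Σ L : ValidPeriods τ σ,
      {c : Quot (IsTranslate (Q := Torus τ σ ⧸ L.1) (α := Fin n)) //
        translateClassRange c = S} :=
    (TileClass.equivData.subtypeEquiv fun t => by rw [t.states_eq_translateClassRange]).trans
      (Equiv.subtypeSigmaEquivSigmaSubtype fun _ c => translateClassRange c = S)
  have hL : ∀ L : ValidPeriods τ σ, Fintype.card (Torus τ σ ⧸ L.1) = Nat.lcm τ σ :=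
    fun L => by rw [← Nat.card_eq_fintype_card, L.card_quotient]
  rw [Nat.card_congr e, Nat.card_sigma, Finset.sum_congr rfl fun L _ =>
      (hL L).symm ▸ card_translateClassRange_eq S (hS.trans (hL L).symm),
    Finset.sum_const, Finset.card_univ, ← Nat.card_eq_fintype_card, card_validPeriods,
    smul_eq_mul]

end Counting

section Main

variable {n τ σ : ℕ} [NeZero τ] [NeZero σ]

instance : Finite (TileClass n τ σ) := Finite.of_equiv _ TileClass.equivData.symm

theorem card_tileClass : Nat.card (TileClass n τ σ) =
    n.choose (Nat.lcm τ σ) * (Nat.totient (Nat.gcd τ σ) * (Nat.lcm τ σ - 1).factorial) := by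
  have h := Nat.card_subtype_comp_eq_mul (TileClass.states (n := n) (τ := τ) (σ := σ))
    (fun S => S.card = Nat.lcm τ σ) (TileClass.card_states_eq)
  rwa [Nat.card_congr (Equiv.subtypeUnivEquiv TileClass.card_states),
    Nat.card_eq_fintype_card (α := {S : Finset (Fin n) // _}), Fintype.card_finset_len,
    Fintype.card_fin] at h

theorem TileClass.card_pairs_commonStates_lcm :
    Nat.card {p : TileClass n τ σ × TileClass n τ σ //
        p.1 ≠ p.2 ∧ commonStates p.1 p.2 (Nat.lcm τ σ)} =
      Nat.card (TileClass n τ σ) *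
        (Nat.totient (Nat.gcd τ σ) * (Nat.lcm τ σ - 1).factorial - 1) := by
  refine Nat.card_subtype_prod_eq_mul (fun q₁ q₂ => q₁ ≠ q₂ ∧ commonStates q₁ q₂ _)
    fun q₁ => ?_
  simp_rw [commonStates_iff, Finset.card_inter_eq_iff_eq q₁.card_states (TileClass.card_states _),
    eq_comm (a := q₁.states)]
  rw [← TileClass.card_states_eq _ q₁.card_states]
  exact Nat.card_subtype_ne_and (P := fun q₂ : TileClass n τ σ => q₂.states = q₁.states) rfl

theorem TileClass.card_pairs_commonStates {m : ℕ} (hm : m < Nat.lcm τ σ) :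
    Nat.card {p : TileClass n τ σ × TileClass n τ σ //
        p.1 ≠ p.2 ∧ commonStates p.1 p.2 m} =
      Nat.card (TileClass n τ σ) * ((Nat.lcm τ σ).choose m *
        (n - Nat.lcm τ σ).choose (Nat.lcm τ σ - m) *
          (Nat.totient (Nat.gcd τ σ) * (Nat.lcm τ σ - 1).factorial)) := by
  refine Nat.card_subtype_prod_eq_mul (fun q₁ q₂ => q₁ ≠ q₂ ∧ commonStates q₁ q₂ m)
    fun q₁ => ?_
  have hne : ∀ q₂ : TileClass n τ σ, (q₁.states ∩ q₂.states).card = m → q₁ ≠ q₂ :=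
    fun q₂ h hq => by rw [← hq, Finset.inter_self, q₁.card_states] at h; omega
  have h := Nat.card_subtype_comp_eq_mul (TileClass.states (n := n) (τ := τ) (σ := σ))
    (fun S => S.card = Nat.lcm τ σ ∧ (q₁.states ∩ S).card = m) fun S hS =>
      TileClass.card_states_eq S hS.1
  rw [card_finset_card_inter_eq _ hm.le, q₁.card_states, Fintype.card_fin] at h
  rw [← h]
  exact Nat.card_congr (Equiv.subtypeEquivRight fun q₂ => by
    rw [commonStates_iff]
    exact ⟨fun h => ⟨q₂.card_states, h.2⟩, fun h => ⟨hne q₂ h.2, h.2⟩⟩)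

end Main

theorem rank_x_tile_counts_general (n τ σ : ℕ) (hτ : 1 ≤ τ) (hσ : 1 ≤ σ) :
    Nat.card (TileClass n τ σ)
        = Nat.totient (Nat.gcd τ σ) * Nat.choose n (Nat.lcm τ σ) *
          Nat.factorial (Nat.lcm τ σ - 1) ∧
    (∀ m : ℕ, m < Nat.lcm τ σ →
      Nat.card {p : TileClass n τ σ × TileClass n τ σ //
          p.1 ≠ p.2 ∧ commonStates p.1 p.2 m}
        = Nat.totient (Nat.gcd τ σ) * Nat.choose n (Nat.lcm τ σ) *
            Nat.factorial (Nat.lcm τ σ - 1) *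
          (Nat.totient (Nat.gcd τ σ) * Nat.choose (Nat.lcm τ σ) m *
            Nat.choose (n - Nat.lcm τ σ) (Nat.lcm τ σ - m) *
            Nat.factorial (Nat.lcm τ σ - 1))) ∧
    Nat.card {p : TileClass n τ σ × TileClass n τ σ //
        p.1 ≠ p.2 ∧ commonStates p.1 p.2 (Nat.lcm τ σ)}
      = Nat.totient (Nat.gcd τ σ) * Nat.choose n (Nat.lcm τ σ) *
          Nat.factorial (Nat.lcm τ σ - 1) *
        (Nat.totient (Nat.gcd τ σ) * Nat.factorial (Nat.lcm τ σ - 1) - 1) := by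
  have : NeZero τ := ⟨by omega⟩
  have : NeZero σ := ⟨by omega⟩
  refine ⟨?_, fun m hm => ?_, ?_⟩
  · rw [card_tileClass]
    ring
  · rw [TileClass.card_pairs_commonStates hm, card_tileClass]
    ring
  · rw [TileClass.card_pairs_commonStates_lcm, card_tileClass]
    ring

/-- with `d = gcd(τ,σ)`, `k = lcm(τ,σ)`, `x = σ/d` and `k ≤ n`:
(1) the number of rank-`x` simple PS tile classes is `φ(d)·C(n,k)·(k−1)!`;
(2) for `m < k` the number of ordered pairs of distinct classes with exactly `m`
common states is `φ(d)·C(n,k)·(k−1)!·φ(d)·C(k,m)·C(n−k,k−m)·(k−1)!` (twice the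
number of unordered pairs); (3) for `m = k` it is
`φ(d)·C(n,k)·(k−1)!·(φ(d)·(k−1)! − 1)`. -/
theorem rank_x_tile_counts (n τ σ : ℕ) (hτ : 1 ≤ τ) (hσ : 1 ≤ σ)
    (hk : Nat.lcm τ σ ≤ n) :
    Nat.card (TileClass n τ σ)
        = Nat.totient (Nat.gcd τ σ) * Nat.choose n (Nat.lcm τ σ) *
          Nat.factorial (Nat.lcm τ σ - 1) ∧
    (∀ m : ℕ, m < Nat.lcm τ σ →
      Nat.card {p : TileClass n τ σ × TileClass n τ σ //
          p.1 ≠ p.2 ∧ commonStates p.1 p.2 m}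
        = Nat.totient (Nat.gcd τ σ) * Nat.choose n (Nat.lcm τ σ) *
            Nat.factorial (Nat.lcm τ σ - 1) *
          (Nat.totient (Nat.gcd τ σ) * Nat.choose (Nat.lcm τ σ) m *
            Nat.choose (n - Nat.lcm τ σ) (Nat.lcm τ σ - m) *
            Nat.factorial (Nat.lcm τ σ - 1))) ∧
    Nat.card {p : TileClass n τ σ × TileClass n τ σ //
        p.1 ≠ p.2 ∧ commonStates p.1 p.2 (Nat.lcm τ σ)}
      = Nat.totient (Nat.gcd τ σ) * Nat.choose n (Nat.lcm τ σ) *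
          Nat.factorial (Nat.lcm τ σ - 1) *
        (Nat.totient (Nat.gcd τ σ) * Nat.factorial (Nat.lcm τ σ - 1) - 1) :=
  rank_x_tile_counts_general n τ σ hτ hσ
end
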